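/- arXiv:2008.08206 — 5 statements merged into one kernel-verified Lean document; each statement's English description precedes it below -/
import Mathlib

section
/- Let $m,n \in \mathbb{N}$. The set $GDD^+_{m,n}$ of symmetric generalized diagonally dominant $m$-order $n$-dimensional tensors with nonnegative diagonal entries is a convex cone: it contains $0$, is closed under nonnegative scalar multiplication, and is closed under addition. -/
open Finset

/-- An index of an `m`-order `n`-dimensional tensor. -/
abbrev Idx (m n : ℕ) := Fin m → Fin n

/-- The diagonal index `(i, i, …, i)`. -/
def diagIdx {m n : ℕ} (i : Fin n) : Idx m n := fun _ => i

/-- A tensor is symmetric if its entries are invariant under permutations of the indices. -/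
def IsSymmetric {m n : ℕ} (A : Idx m n → ℝ) : Prop :=
  ∀ (σ : Equiv.Perm (Fin m)) (j : Idx m n), A (j ∘ σ) = A j

/-- The sum of the absolute values of the off-diagonal entries on the `i`-th slice. -/
def rowSum {m n : ℕ} (hm : 0 < m) (A : Idx m n → ℝ) (i : Fin n) : ℝ :=
  ∑ j ∈ Finset.univ.filter (fun j : Idx m n => j ⟨0, hm⟩ = i ∧ j ≠ diagIdx i), |A j|

/-- A tensor is diagonally dominant if each diagonal entry dominates (in absolute value)
the sum of the absolute values of the off-diagonal entries on its slice. -/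
def IsDD {m n : ℕ} (hm : 0 < m) (A : Idx m n → ℝ) : Prop :=
  ∀ i : Fin n, rowSum hm A i ≤ |A (diagIdx i)|

/-- `A` is a symmetric generalized diagonally dominant tensor with nonnegative diagonal:
there is a positive diagonal scaling making it diagonally dominant. -/
def IsGDDplus {m n : ℕ} (hm : 0 < m) (A : Idx m n → ℝ) : Prop :=
  IsSymmetric A ∧ (∀ i : Fin n, 0 ≤ A (diagIdx i)) ∧
    ∃ d : Fin n → ℝ, (∀ i, 0 < d i) ∧ IsDD hm (fun j => A j * ∏ k : Fin m, d (j k))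

/-!
A tensor is in `GDD⁺` exactly when it is symmetric, has nonnegative diagonal, and its comparison
form `M(A) x^m = ∑ᵢ aᵢ…ᵢ xᵢ^m - ∑_{j off-diagonal} |aⱼ| x_{j₁} ⋯ x_{jₘ}` is nonnegative on the
nonnegative orthant. Since `M(A + B) x^m ≥ M(A) x^m + M(B) x^m` there, closure under addition
follows (the other two properties are immediate).

If `D` scales `A` to a diagonally dominant tensor, AM–GM bounds each off-diagonal monomial of
`M(A) x^m` in the variables `xᵢ / dᵢ` by the mean of their `m`-th powers, and summing these bounds
against the row inequalities gives copositivity. Conversely, given copositivity, minimize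
`M(A) x^m / ∑ xᵢ^m` over nonnegative `x` supported in a set `S`. The first-order conditions at a
minimizer `x` say that `x` scales `A` to a diagonally dominant tensor on the support of `x`; a
second variation along the zero set `U` of `x` shows that `A` has no entries coupling `U` with
that support, so a scaling for `U` (by induction on `S`) can be added to `x`.
-/

namespace Tensor

open Filter Topology

variable {m n : ℕ}

def offDiag (m n : ℕ) : Finset (Idx m n) := univ.filter fun j => ∀ i, j ≠ diagIdx i

def slice (k : Fin m) (i : Fin n) : Finset (Idx m n) :=
  univ.filter fun j => j k = i ∧ j ≠ diagIdx i

def mono (x : Fin n → ℝ) (j : Idx m n) : ℝ := ∏ k, x (j k)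

def sliceSum (hm : 0 < m) (A : Idx m n → ℝ) (x : Fin n → ℝ) (i : Fin n) : ℝ :=
  ∑ j ∈ slice ⟨0, hm⟩ i, |A j| * mono x j

/-- The form `M(A) x^m` of the comparison tensor `M(A)`. -/
def comparisonForm (A : Idx m n → ℝ) (x : Fin n → ℝ) : ℝ :=
  ∑ i, A (diagIdx i) * x i ^ m - ∑ j ∈ offDiag m n, |A j| * mono x j

def IsDDScaling (hm : 0 < m) (A : Idx m n → ℝ) (d : Fin n → ℝ) : Prop :=
  ∀ i, sliceSum hm A d i ≤ A (diagIdx i) * d i ^ m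

lemma filter_offDiag_eq_slice (k : Fin m) (i : Fin n) :
    (offDiag m n).filter (fun j => j k = i) = slice k i := by
  ext j
  simp only [offDiag, slice, mem_filter, mem_univ, true_and]
  refine ⟨fun ⟨hj, hk⟩ => ⟨hk, hj i⟩, fun ⟨hk, hj⟩ => ⟨fun i' hi' => hj ?_, hk⟩⟩
  subst hi'
  exact hk ▸ rfl

lemma sum_offDiag_eq_sum_slice (k : Fin m) (g : Idx m n → ℝ) :
    ∑ j ∈ offDiag m n, g j = ∑ i, ∑ j ∈ slice k i, g j := by
  simp only [← filter_offDiag_eq_slice k]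
  exact (sum_fiberwise _ _ _).symm

lemma mono_comp_perm (x : Fin n → ℝ) (j : Idx m n) (σ : Equiv.Perm (Fin m)) :
    mono x (j ∘ σ) = mono x j :=
  Equiv.prod_comp σ fun k => x (j k)

lemma comp_perm_eq_diagIdx_iff (j : Idx m n) (σ : Equiv.Perm (Fin m)) (i : Fin n) :
    j ∘ σ = diagIdx i ↔ j = diagIdx i := by
  refine ⟨fun h => funext fun k => ?_, fun h => by rw [h]; rfl⟩
  simpa [diagIdx] using congrFun h (σ.symm k)

lemma sum_slice_eq_of_comp_perm {w : Idx m n → ℝ}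
    (hw : ∀ (σ : Equiv.Perm (Fin m)) j, w (j ∘ σ) = w j) (k k' : Fin m) (i : Fin n) :
    ∑ j ∈ slice k i, w j = ∑ j ∈ slice k' i, w j := by
  refine sum_nbij' (· ∘ Equiv.swap k k') (· ∘ Equiv.swap k k') ?_ ?_
    (fun j _ => by ext; simp) (fun j _ => by ext; simp) (fun j _ => (hw _ j).symm) <;>
  · intro j hj
    simpa [slice, comp_perm_eq_diagIdx_iff] using hj

lemma sum_offDiag_mul_sum_apply (hm : 0 < m) {w : Idx m n → ℝ}
    (hw : ∀ (σ : Equiv.Perm (Fin m)) j, w (j ∘ σ) = w j) (f : Fin n → ℝ) :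
    ∑ j ∈ offDiag m n, w j * ∑ k, f (j k) = m * ∑ i, (∑ j ∈ slice ⟨0, hm⟩ i, w j) * f i := by
  simp only [mul_sum]
  rw [sum_comm]
  calc ∑ k, ∑ j ∈ offDiag m n, w j * f (j k)
      = ∑ k : Fin m, ∑ i, ∑ j ∈ slice k i, w j * f i := by
        refine sum_congr rfl fun k _ => ?_
        rw [sum_offDiag_eq_sum_slice k]
        refine sum_congr rfl fun i _ => sum_congr rfl fun j hj => ?_
        rw [(mem_filter.1 hj).2.1]
    _ = ∑ _k : Fin m, ∑ i, (∑ j ∈ slice ⟨0, hm⟩ i, w j) * f i := by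
        refine sum_congr rfl fun k _ => sum_congr rfl fun i _ => ?_
        rw [← sum_mul, sum_slice_eq_of_comp_perm hw k]
    _ = _ := by simp [mul_sum]

lemma mono_nonneg {x : Fin n → ℝ} (hx : 0 ≤ x) (j : Idx m n) : 0 ≤ mono x j :=
  prod_nonneg fun k _ => hx (j k)

lemma isDD_scaled_iff (hm : 0 < m) {A : Idx m n → ℝ} (hdiag : ∀ i, 0 ≤ A (diagIdx i))
    {d : Fin n → ℝ} (hd : 0 ≤ d) :
    IsDD hm (fun j => A j * ∏ k, d (j k)) ↔ IsDDScaling hm A d := by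
  refine forall_congr' fun i => ?_
  have hrow : rowSum hm (fun j => A j * ∏ k, d (j k)) i = sliceSum hm A d i :=
    sum_congr rfl fun j _ => by rw [abs_mul, abs_of_nonneg (prod_nonneg fun k _ => hd (j k))]; rfl
  have hdiagEntry : |A (diagIdx i) * ∏ k, d (diagIdx (m := m) i k)| = A (diagIdx i) * d i ^ m := by
    rw [abs_of_nonneg (mul_nonneg (hdiag i) (prod_nonneg fun k _ => hd _))]
    simp [diagIdx]
  rw [hrow, hdiagEntry]

lemma prod_le_inv_card_mul_sum_pow {ι : Type*} {s : Finset ι} (hs : s.Nonempty) {z : ι → ℝ}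
    (hz : ∀ i ∈ s, 0 ≤ z i) : ∏ i ∈ s, z i ≤ (#s : ℝ)⁻¹ * ∑ i ∈ s, z i ^ #s := by
  have hcard : #s ≠ 0 := hs.card_pos.ne'
  have hamgm := Real.geom_mean_le_arith_mean_weighted s (fun _ => (#s : ℝ)⁻¹)
    (fun i => z i ^ #s) (fun _ _ => by positivity) (by simp [hcard])
    (fun i hi => pow_nonneg (hz i hi) _)
  rw [← mul_sum] at hamgm
  refine le_of_eq_of_le (prod_congr rfl fun i hi => ?_) hamgm
  exact (Real.pow_rpow_inv_natCast (hz i hi) hcard).symm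

lemma comparisonForm_nonneg_of_isDDScaling (hm : 0 < m) {A : Idx m n → ℝ} (hA : IsSymmetric A)
    {d : Fin n → ℝ} (hd : ∀ i, 0 < d i) (hdd : IsDDScaling hm A d)
    {x : Fin n → ℝ} (hx : 0 ≤ x) : 0 ≤ comparisonForm A x := by
  set y : Fin n → ℝ := fun i => x i / d i
  have hy : 0 ≤ y := fun i => div_nonneg (hx i) (hd i).le
  have hxy : ∀ i, x i = d i * y i := fun i => (mul_div_cancel₀ _ (hd i).ne').symm
  have hw : ∀ (σ : Equiv.Perm (Fin m)) j, |A (j ∘ σ)| * mono d (j ∘ σ) = |A j| * mono d j :=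
    fun σ j => by rw [hA σ j, mono_comp_perm]
  have hamgm : ∀ j, mono y j ≤ (m : ℝ)⁻¹ * ∑ k, y (j k) ^ m := fun j => by
    simpa [mono] using prod_le_inv_card_mul_sum_pow ⟨⟨0, hm⟩, mem_univ _⟩ (fun k _ => hy (j k))
  have hmpos : (0 : ℝ) < m := Nat.cast_pos.2 hm
  have hd0 : 0 ≤ d := fun i => (hd i).le
  rw [comparisonForm, sub_nonneg]
  calc ∑ j ∈ offDiag m n, |A j| * mono x j
      = ∑ j ∈ offDiag m n, |A j| * mono d j * mono y j := by
        refine sum_congr rfl fun j _ => ?_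
        simp only [mono, hxy, prod_mul_distrib, mul_assoc]
    _ ≤ ∑ j ∈ offDiag m n, |A j| * mono d j * ((m : ℝ)⁻¹ * ∑ k, y (j k) ^ m) :=
        sum_le_sum fun j _ =>
          mul_le_mul_of_nonneg_left (hamgm j) (mul_nonneg (abs_nonneg _) (mono_nonneg hd0 j))
    _ = (m : ℝ)⁻¹ * ∑ j ∈ offDiag m n, |A j| * mono d j * ∑ k, y (j k) ^ m := by
        rw [mul_sum]
        exact sum_congr rfl fun j _ => by ring
    _ = ∑ i, sliceSum hm A d i * y i ^ m := by
        rw [sum_offDiag_mul_sum_apply (w := fun j => |A j| * mono d j) hm hw (fun i => y i ^ m),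
          inv_mul_cancel_left₀ hmpos.ne']
        rfl
    _ ≤ ∑ i, A (diagIdx i) * d i ^ m * y i ^ m :=
        sum_le_sum fun i _ => mul_le_mul_of_nonneg_right (hdd i) (pow_nonneg (hy i) m)
    _ = ∑ i, A (diagIdx i) * x i ^ m := by simp only [hxy, mul_pow, mul_assoc]

lemma mem_offDiag_of_mem_slice {k : Fin m} {i : Fin n} {j : Idx m n} (hj : j ∈ slice k i) :
    j ∈ offDiag m n := by
  rw [← filter_offDiag_eq_slice] at hj
  exact (mem_filter.1 hj).1

lemma sliceSum_eq_zero (hm : 0 < m) (A : Idx m n → ℝ) {x : Fin n → ℝ} {i : Fin n}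
    (hx : x i = 0) : sliceSum hm A x i = 0 :=
  sum_eq_zero fun j hj => by
    rw [mono, prod_eq_zero (mem_univ ⟨0, hm⟩) ((mem_filter.1 hj).2.1 ▸ hx), mul_zero]

lemma mono_eq_zero {x : Fin n → ℝ} {j : Idx m n} {k : Fin m} (hx : x (j k) = 0) :
    mono x j = 0 :=
  prod_eq_zero (mem_univ k) hx

lemma mono_add_of_forall_eq_zero (hm : 0 < m) {x y : Fin n → ℝ} {j : Idx m n}
    (hy : ∀ k, y (j k) = 0) : mono (x + y) j = mono x j + mono y j := by
  rw [mono_eq_zero (hy ⟨0, hm⟩), add_zero]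
  exact prod_congr rfl fun k _ => by simp [hy k]

lemma isDDScaling_add (hm : 0 < m) {A : Idx m n → ℝ} {x y : Fin n → ℝ} (hx0 : 0 ≤ x)
    (hy0 : 0 ≤ y) (hx : IsDDScaling hm A x) (hy : IsDDScaling hm A y)
    (hdisj : ∀ i, x i = 0 ∨ y i = 0)
    (hA : ∀ j ∈ offDiag m n, (∃ k, x (j k) ≠ 0) → (∃ k, y (j k) ≠ 0) →
      (∀ k, x (j k) + y (j k) ≠ 0) → A j = 0) :
    IsDDScaling hm A (x + y) := by
  have hterm : ∀ j ∈ offDiag m n,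
      |A j| * mono (x + y) j = |A j| * mono x j + |A j| * mono y j := by
    intro j hj
    rw [← mul_add]
    by_cases hsum : ∃ k, x (j k) + y (j k) = 0
    · obtain ⟨k, hk⟩ := hsum
      obtain ⟨hxk, hyk⟩ := (add_eq_zero_iff_of_nonneg (hx0 _) (hy0 _)).1 hk
      rw [mono_eq_zero (x := x + y) (k := k) hk, mono_eq_zero hxk, mono_eq_zero hyk, add_zero]
    push Not at hsum
    by_cases hxj : ∃ k, x (j k) ≠ 0
    · by_cases hyj : ∃ k, y (j k) ≠ 0
      · rw [hA j hj hxj hyj hsum, abs_zero, zero_mul, zero_mul]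
      · push Not at hyj
        rw [mono_add_of_forall_eq_zero hm hyj]
    · push Not at hxj
      rw [add_comm x, add_comm (mono x j), mono_add_of_forall_eq_zero hm hxj]
  intro i
  have hslice : sliceSum hm A (x + y) i = sliceSum hm A x i + sliceSum hm A y i := by
    rw [sliceSum, sliceSum, sliceSum, ← sum_add_distrib]
    exact sum_congr rfl fun j hj => hterm j (mem_offDiag_of_mem_slice hj)
  rcases hdisj i with h | h
  · simpa [hslice, sliceSum_eq_zero hm A h, h] using hy i
  · simpa [hslice, sliceSum_eq_zero hm A h, h] using hx i

def scaleOn (U : Finset (Fin n)) (s : ℝ) (w : Fin n → ℝ) (i : Fin n) : ℝ :=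
  if i ∈ U then s * w i else w i

def mult (U : Finset (Fin n)) (j : Idx m n) : ℕ := #(univ.filter fun k => j k ∈ U)

lemma mono_scaleOn (U : Finset (Fin n)) (s : ℝ) (w : Fin n → ℝ) (j : Idx m n) :
    mono (scaleOn U s w) j = s ^ mult U j * mono w j := by
  simp only [mono, scaleOn, mult, prod_ite, prod_mul_distrib, prod_const, mul_assoc]
  rw [prod_filter_mul_prod_filter_not]

lemma scaleOn_one (U : Finset (Fin n)) (w : Fin n → ℝ) : scaleOn U 1 w = w :=
  funext fun i => by simp [scaleOn]

lemma scaleOn_nonneg {U : Finset (Fin n)} {s : ℝ} {w : Fin n → ℝ} (hs : 0 ≤ s) (hw : 0 ≤ w) :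
    0 ≤ scaleOn U s w := fun i => by
  unfold scaleOn
  split_ifs
  exacts [mul_nonneg hs (hw i), hw i]

lemma scaleOn_eq_zero (U : Finset (Fin n)) (s : ℝ) {w : Fin n → ℝ} {i : Fin n} (hw : w i = 0) :
    scaleOn U s w i = 0 := by
  simp [scaleOn, hw]

lemma comparisonForm_scaleOn_sub (A : Idx m n → ℝ) (U : Finset (Fin n)) (s μ : ℝ)
    (w : Fin n → ℝ) :
    comparisonForm A (scaleOn U s w) - μ * ∑ i, scaleOn U s w i ^ m =
      s ^ m * ∑ i ∈ U, (A (diagIdx i) - μ) * w i ^ m + ∑ i ∈ Uᶜ, (A (diagIdx i) - μ) * w i ^ m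
        - ∑ j ∈ offDiag m n, |A j| * mono w j * s ^ mult U j := by
  have hdiag : ∑ i, A (diagIdx i) * scaleOn U s w i ^ m - μ * ∑ i, scaleOn U s w i ^ m =
      s ^ m * ∑ i ∈ U, (A (diagIdx i) - μ) * w i ^ m
        + ∑ i ∈ Uᶜ, (A (diagIdx i) - μ) * w i ^ m := by
    rw [mul_sum, ← sum_sub_distrib, ← sum_add_sum_compl U, mul_sum]
    congr 1 <;> refine sum_congr rfl fun i hi => ?_
    · simp only [scaleOn, if_pos hi]
      ring
    · simp only [scaleOn, if_neg (mem_compl.1 hi)]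
      ring
  simp only [comparisonForm, mono_scaleOn, sub_right_comm _ (∑ j ∈ offDiag m n, _), hdiag]
  congr 1
  exact sum_congr rfl fun j _ => by ring

lemma comparisonForm_smul (A : Idx m n → ℝ) (c : ℝ) (x : Fin n → ℝ) :
    comparisonForm A (c • x) = c ^ m * comparisonForm A x := by
  simp only [comparisonForm, mono, Pi.smul_apply, smul_eq_mul, mul_pow, prod_mul_distrib,
    prod_const, card_univ, Fintype.card_fin, mul_sub, mul_sum]
  congr 1 <;> exact sum_congr rfl fun _ _ => by ring

lemma continuous_comparisonForm (A : Idx m n → ℝ) : Continuous (comparisonForm A) := by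
  unfold comparisonForm mono
  fun_prop

/-- `x` is a normalized minimizer of `comparisonForm A y / ∑ i, y i ^ m` over the nonnegative `y`
supported in `S`. -/
structure IsRayleighMinimizer (A : Idx m n → ℝ) (S : Finset (Fin n)) (x : Fin n → ℝ) : Prop where
  nonneg : 0 ≤ x
  eq_zero_of_notMem : ∀ i ∉ S, x i = 0
  sum_pow : ∑ i, x i ^ m = 1
  le : ∀ y, 0 ≤ y → (∀ i ∉ S, y i = 0) → comparisonForm A x * ∑ i, y i ^ m ≤ comparisonForm A y

lemma exists_isRayleighMinimizer (hm : 0 < m) (A : Idx m n → ℝ) {S : Finset (Fin n)}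
    (hS : S.Nonempty) : ∃ x, IsRayleighMinimizer A S x := by
  set K : Set (Fin n → ℝ) := {y | 0 ≤ y ∧ (∀ i ∉ S, y i = 0) ∧ ∑ i, y i ^ m = 1}
  have hsupp : IsClosed {y : Fin n → ℝ | ∀ i ∉ S, y i = 0} := by
    simp only [Set.ofPred_forall]
    exact isClosed_iInter fun i => isClosed_iInter fun _ =>
      isClosed_eq (continuous_apply i) continuous_const
  have hKc : IsCompact K := by
    refine (isCompact_Icc (a := (0 : Fin n → ℝ)) (b := 1)).of_isClosed_subset
      ((isClosed_le continuous_const continuous_id).inter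
        (hsupp.inter (isClosed_eq (by fun_prop) continuous_const)))
      (fun y hy => ⟨hy.1, fun i => (pow_le_one_iff_of_nonneg (hy.1 i) hm.ne').1 ?_⟩)
    exact hy.2.2 ▸ single_le_sum (fun i _ => pow_nonneg (hy.1 i) m) (mem_univ i)
  obtain ⟨i₀, hi₀⟩ := hS
  have hKne : (Pi.single i₀ 1 : Fin n → ℝ) ∈ K := by
    refine ⟨Pi.single_nonneg.2 zero_le_one, fun i hi => ?_, ?_⟩
    · exact Pi.single_eq_of_ne (ne_of_mem_of_not_mem hi₀ hi).symm _
    · simp [Pi.single_apply, zero_pow hm.ne']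
  obtain ⟨x, ⟨hx0, hxS, hx1⟩, hxmin⟩ :=
    hKc.exists_isMinOn ⟨_, hKne⟩ (continuous_comparisonForm A).continuousOn
  refine ⟨x, hx0, hxS, hx1, fun y hy hyS => ?_⟩
  set N := ∑ i, y i ^ m
  rcases (sum_nonneg fun i _ => pow_nonneg (hy i) m : 0 ≤ N).eq_or_lt with hN | hN
  · have hy0 : y = 0 := funext fun i =>
      pow_eq_zero_iff hm.ne' |>.1 <| (sum_eq_zero_iff_of_nonneg fun i _ =>
        pow_nonneg (hy i) m).1 hN.symm i (mem_univ i)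
    simp [N, hy0, comparisonForm, mono, zero_pow hm.ne']
  set c := (N ^ (m⁻¹ : ℝ))⁻¹
  have hc : c ^ m = N⁻¹ := by rw [inv_pow, Real.rpow_inv_natCast_pow hN.le hm.ne']
  have hcK : c • y ∈ K := by
    refine ⟨smul_nonneg (by positivity) hy, fun i hi => by simp [hyS i hi], ?_⟩
    simp only [Pi.smul_apply, smul_eq_mul, mul_pow, ← mul_sum, hc]
    exact inv_mul_cancel₀ hN.ne'
  have := hxmin hcK
  rw [Set.mem_ofPred_eq, comparisonForm_smul, hc] at this
  rwa [← le_inv_mul_iff₀' hN]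

lemma hasDerivAt_pow_mul_add_sub_sum {ι : Type*} (t : Finset ι) (α β : ℝ) (c : ι → ℝ)
    (r : ι → ℕ) :
    HasDerivAt (fun s : ℝ => s ^ m * α + β - ∑ j ∈ t, c j * s ^ r j)
      (m * α - ∑ j ∈ t, c j * r j) 1 := by
  simpa using (((hasDerivAt_pow m 1).mul_const α).add_const β).fun_sub
    (HasDerivAt.fun_sum fun j _ => (hasDerivAt_pow (r j) 1).const_mul (c j))

/-- Scaling `x i` by `s` has a local minimum at `s = 1`; counting the positions of `i` in each
index turns the vanishing derivative into `sliceSum hm A x i = (A (diagIdx i) - μ) * x i ^ m`. -/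
lemma IsRayleighMinimizer.isDDScaling (hm : 0 < m) {A : Idx m n → ℝ} (hA : IsSymmetric A)
    {S : Finset (Fin n)} {x : Fin n → ℝ} (hx : IsRayleighMinimizer A S x)
    (hμ : 0 ≤ comparisonForm A x) : IsDDScaling hm A x := by
  intro i
  set μ := comparisonForm A x
  have hmin : IsLocalMin (fun s => comparisonForm A (scaleOn {i} s x)
      - μ * ∑ i', scaleOn {i} s x i' ^ m) 1 := by
    filter_upwards [Ioi_mem_nhds one_pos] with s hs
    have := hx.le (scaleOn {i} s x) (scaleOn_nonneg (le_of_lt hs) hx.nonneg)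
      fun i' hi' => scaleOn_eq_zero _ _ (hx.eq_zero_of_notMem i' hi')
    simp only [scaleOn_one, hx.sum_pow]
    linarith
  simp only [comparisonForm_scaleOn_sub, sum_singleton] at hmin
  have hderiv := hmin.hasDerivAt_eq_zero (hasDerivAt_pow_mul_add_sub_sum _ _ _ _ _)
  have hcount :
      ∑ j ∈ offDiag m n, |A j| * mono x j * (mult {i} j : ℝ) = m * sliceSum hm A x i := by
    have hw : ∀ (σ : Equiv.Perm (Fin m)) j, |A (j ∘ σ)| * mono x (j ∘ σ) = |A j| * mono x j :=
      fun σ j => by rw [hA σ j, mono_comp_perm]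
    simp only [mult, mem_singleton, natCast_card_filter]
    rw [sum_offDiag_mul_sum_apply (w := fun j => |A j| * mono x j) hm hw
      (fun i' => if i' = i then 1 else 0)]
    simp [sliceSum]
  have hm' : (m : ℝ) ≠ 0 := Nat.cast_ne_zero.2 hm.ne'
  have hrow : sliceSum hm A x i = (A (diagIdx i) - μ) * x i ^ m :=
    mul_left_cancel₀ hm' (by linarith)
  rw [hrow]
  linarith [mul_nonneg hμ (pow_nonneg (hx.nonneg i) m)]

lemma nonpos_of_forall_mul_pow_le {c α : ℝ} {r m : ℕ} (hrm : r < m)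
    (h : ∀ s : ℝ, 0 < s → c * s ^ r ≤ α * s ^ m) : c ≤ 0 := by
  have hlim : Tendsto (fun s : ℝ => α * s ^ (m - r)) (𝓝[>] 0) (𝓝 0) := by
    have hcont : Continuous fun s : ℝ => α * s ^ (m - r) := by fun_prop
    have := (hcont.tendsto 0).mono_left (nhdsWithin_le_nhds (s := Set.Ioi 0))
    simpa [zero_pow (Nat.sub_ne_zero_of_lt hrm)] using this
  refine ge_of_tendsto hlim ?_
  filter_upwards [self_mem_nhdsWithin] with s hs
  have := h s hs
  rw [← Nat.sub_add_cancel hrm.le, pow_add, ← mul_assoc] at this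
  exact le_of_mul_le_mul_right this (pow_pos hs r)

lemma IsRayleighMinimizer.sum_offDiag_mul_pow_sub_le (hm : 0 < m) {A : Idx m n → ℝ}
    {S : Finset (Fin n)} {x : Fin n → ℝ} (hx : IsRayleighMinimizer A S x) {U : Finset (Fin n)}
    {w : Fin n → ℝ} (hw0 : 0 ≤ w) (hwS : ∀ i ∉ S, w i = 0) (hwx : scaleOn U 0 w = x)
    {s : ℝ} (hs : 0 ≤ s) :
    ∑ j ∈ offDiag m n, |A j| * mono w j * (s ^ mult U j - 0 ^ mult U j) ≤
      s ^ m * ∑ i ∈ U, (A (diagIdx i) - comparisonForm A x) * w i ^ m := by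
  have h0 := comparisonForm_scaleOn_sub A U 0 (comparisonForm A x) w
  have hs' := comparisonForm_scaleOn_sub A U s (comparisonForm A x) w
  rw [hwx, hx.sum_pow, mul_one, sub_self, zero_pow hm.ne', zero_mul, zero_add] at h0
  have hle := hx.le (scaleOn U s w) (scaleOn_nonneg hs hw0)
    fun i hi => scaleOn_eq_zero _ _ (hwS i hi)
  simp only [mul_sub, sum_sub_distrib]
  linarith

/-- Along `s ↦ x + s • 1_U`, with `U` the zero set of `x` in `S`, the comparison form grows like
`s ^ m` on the diagonal, while an entry coupling `U` with the support of `x` would make it drop at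
a lower power of `s`. -/
lemma IsRayleighMinimizer.eq_zero_of_mixed {A : Idx m n → ℝ} {S : Finset (Fin n)}
    {x : Fin n → ℝ} (hx : IsRayleighMinimizer A S x) {j : Idx m n} (hj : j ∈ offDiag m n)
    (hjS : ∀ k, j k ∈ S) (hzero : ∃ k, x (j k) = 0) (hpos : ∃ k, x (j k) ≠ 0) : A j = 0 := by
  obtain ⟨k₀, hk₀⟩ := hzero
  obtain ⟨k₁, hk₁⟩ := hpos
  have hm : 0 < m := k₀.pos
  set U := S.filter (x · = 0)
  set w : Fin n → ℝ := U.piecewise 1 x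
  have hw0 : 0 ≤ w := fun i => by
    by_cases hiU : i ∈ U
    · simp [w, hiU]
    · simpa [w, hiU] using hx.nonneg i
  have hwS : ∀ i ∉ S, w i = 0 := fun i hi => by
    have hiU : i ∉ U := fun h => hi (mem_filter.1 h).1
    simp [w, hiU, hx.eq_zero_of_notMem i hi]
  have hwx : scaleOn U 0 w = x := funext fun i => by
    by_cases hiU : i ∈ U
    · simp [scaleOn, hiU, (mem_filter.1 hiU).2]
    · simp [scaleOn, w, hiU]
  have hr0 : mult U j ≠ 0 :=
    card_ne_zero_of_mem (mem_filter.2 ⟨mem_univ k₀, mem_filter.2 ⟨hjS k₀, hk₀⟩⟩)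
  have hrm : mult U j < m := by
    have hk₁U : j k₁ ∉ U := fun h => hk₁ (mem_filter.1 h).2
    simpa [mult] using card_lt_card (filter_ssubset.2 ⟨k₁, mem_univ _, hk₁U⟩)
  have hc : |A j| * mono w j ≤ 0 := by
    refine nonpos_of_forall_mul_pow_le
      (α := ∑ i ∈ U, (A (diagIdx i) - comparisonForm A x) * w i ^ m) hrm fun s hs => ?_
    have hterm := single_le_sum
      (f := fun j' => |A j'| * mono w j' * (s ^ mult U j' - 0 ^ mult U j'))
      (fun j' _ => mul_nonneg (mul_nonneg (abs_nonneg _) (mono_nonneg hw0 _))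
        (sub_nonneg.2 (pow_le_pow_left₀ le_rfl hs.le _))) hj
    rw [zero_pow hr0, sub_zero] at hterm
    rw [mul_comm _ (s ^ m)]
    exact hterm.trans (hx.sum_offDiag_mul_pow_sub_le hm hw0 hwS hwx hs.le)
  have hmono : 0 < mono w j := prod_pos fun k _ => by
    by_cases hU : j k ∈ U
    · simp [w, hU]
    · simp only [w, hU, piecewise_eq_of_notMem, not_false_eq_true]
      exact (hx.nonneg _).lt_of_ne (Ne.symm fun h => hU (mem_filter.2 ⟨hjS k, h⟩))
  exact abs_eq_zero.1 (le_antisymm (nonpos_of_mul_nonpos_left hc hmono) (abs_nonneg _))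

lemma exists_isDDScaling (hm : 0 < m) {A : Idx m n → ℝ} (hA : IsSymmetric A)
    (hcop : ∀ x, 0 ≤ x → 0 ≤ comparisonForm A x) (S : Finset (Fin n)) :
    ∃ d, 0 ≤ d ∧ (∀ i, 0 < d i ↔ i ∈ S) ∧ IsDDScaling hm A d := by
  induction S using Finset.strongInduction with
  | H S ih =>
  rcases S.eq_empty_or_nonempty with rfl | hS
  · exact ⟨0, le_rfl, by simp, fun i => by simp [sliceSum_eq_zero hm A (x := 0) rfl, hm.ne']⟩
  obtain ⟨x, hx⟩ := exists_isRayleighMinimizer hm A hS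
  set U := S.filter (x · = 0)
  have hxS : ∀ i, x i ≠ 0 → i ∈ S := fun i hi => by_contra fun h => hi (hx.eq_zero_of_notMem i h)
  have hUS : U ⊂ S := by
    obtain ⟨i, hi⟩ : ∃ i, x i ≠ 0 := by
      by_contra! h
      simpa [h, hm.ne'] using hx.sum_pow
    exact filter_ssubset.2 ⟨i, hxS i hi, hi⟩
  obtain ⟨d, hd0, hdU, hdd⟩ := ih U hUS
  have hdU' : ∀ i, d i ≠ 0 → i ∈ U := fun i h => (hdU i).1 ((hd0 i).lt_of_ne (Ne.symm h))
  refine ⟨x + d, add_nonneg hx.nonneg hd0, fun i => ?_,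
    isDDScaling_add hm hx.nonneg hd0 (hx.isDDScaling hm hA (hcop x hx.nonneg)) hdd
      (fun i => ?_) fun j hj ⟨k, hk⟩ ⟨k', hk'⟩ hsum => ?_⟩
  · have hx0 := hx.nonneg i
    by_cases hiU : i ∈ U
    · simp only [Pi.add_apply, (mem_filter.1 hiU).1, iff_true]
      exact add_pos_of_nonneg_of_pos hx0 ((hdU i).2 hiU)
    · have hdi : d i = 0 := by_contra fun h => hiU (hdU' i h)
      simp only [Pi.add_apply, hdi, add_zero]
      refine ⟨fun h => hxS i h.ne', fun hi => hx0.lt_of_ne (Ne.symm fun h => hiU ?_)⟩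
      exact mem_filter.2 ⟨hi, h⟩
  · by_cases hiU : i ∈ U
    · exact .inl (mem_filter.1 hiU).2
    · exact .inr (by_contra fun h => hiU (hdU' i h))
  · refine hx.eq_zero_of_mixed hj (fun k => ?_) ⟨k', (mem_filter.1 (hdU' _ hk')).2⟩ ⟨k, hk⟩
    by_contra hkS
    have hdk : d (j k) = 0 := by_contra fun h => hkS (mem_filter.1 (hdU' _ h)).1
    exact hsum k (by rw [hx.eq_zero_of_notMem _ hkS, hdk, add_zero])

theorem isGDDplus_iff (hm : 0 < m) {A : Idx m n → ℝ} :
    IsGDDplus hm A ↔ IsSymmetric A ∧ (∀ i, 0 ≤ A (diagIdx i)) ∧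
      ∀ x, 0 ≤ x → 0 ≤ comparisonForm A x := by
  refine and_congr_right fun hA => and_congr_right fun hdiag => ⟨?_, fun hcop => ?_⟩
  · rintro ⟨d, hd, hdd⟩ x hx
    exact comparisonForm_nonneg_of_isDDScaling hm hA hd
      ((isDD_scaled_iff hm hdiag fun i => (hd i).le).1 hdd) hx
  · obtain ⟨d, hd0, hd, hdd⟩ := exists_isDDScaling hm hA hcop univ
    exact ⟨d, fun i => (hd i).2 (mem_univ i), (isDD_scaled_iff hm hdiag hd0).2 hdd⟩

lemma comparisonForm_const_mul {c : ℝ} (hc : 0 ≤ c) (A : Idx m n → ℝ) (x : Fin n → ℝ) :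
    comparisonForm (fun j => c * A j) x = c * comparisonForm A x := by
  simp only [comparisonForm, abs_mul, abs_of_nonneg hc, mul_sub, mul_sum, mul_assoc]

lemma comparisonForm_add_le (A B : Idx m n → ℝ) {x : Fin n → ℝ} (hx : 0 ≤ x) :
    comparisonForm A x + comparisonForm B x ≤ comparisonForm (fun j => A j + B j) x := by
  have hoff : ∑ j ∈ offDiag m n, |A j + B j| * mono x j ≤
      ∑ j ∈ offDiag m n, |A j| * mono x j + ∑ j ∈ offDiag m n, |B j| * mono x j := by
    rw [← sum_add_distrib]
    exact sum_le_sum fun j _ => by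
      rw [← add_mul]
      exact mul_le_mul_of_nonneg_right (abs_add_le _ _) (mono_nonneg hx j)
  simp only [comparisonForm, add_mul, sum_add_distrib]
  linarith

end Tensor

/-- `GDD⁺_{m,n}` is a convex cone: it contains `0`, is closed under nonnegative scalar
multiplication, and is closed under addition. -/
theorem GDDplus_convexCone (m n : ℕ) (hm : 0 < m) :
    IsGDDplus hm (fun _ : Idx m n => (0 : ℝ)) ∧
    (∀ c : ℝ, 0 ≤ c → ∀ A : Idx m n → ℝ, IsGDDplus hm A →
      IsGDDplus hm (fun j => c * A j)) ∧
    (∀ A B : Idx m n → ℝ, IsGDDplus hm A → IsGDDplus hm B →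
      IsGDDplus hm (fun j => A j + B j)) := by
  simp only [Tensor.isGDDplus_iff hm]
  refine ⟨⟨fun _ _ => rfl, fun _ => le_rfl, fun x _ => by simp [Tensor.comparisonForm]⟩, ?_, ?_⟩
  · rintro c hc A ⟨hA, hdiag, hcop⟩
    refine ⟨fun σ j => by simp only [hA σ j], fun i => mul_nonneg hc (hdiag i), fun x hx => ?_⟩
    rw [Tensor.comparisonForm_const_mul hc]
    exact mul_nonneg hc (hcop x hx)
  · rintro A B ⟨hA, hAdiag, hAcop⟩ ⟨hB, hBdiag, hBcop⟩
    refine ⟨fun σ j => by simp only [hA σ j, hB σ j], fun i => add_nonneg (hAdiag i) (hBdiag i),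
      fun x hx => ?_⟩
    linarith [Tensor.comparisonForm_add_le A B hx, hAcop x hx, hBcop x hx]
end

section
/- Let $m,n \in \mathbb{N}$. Every symmetric diagonally dominant tensor $\mathcal{A} \in DD^+_{m,n}$ (with nonnegative diagonal entries) can be written as a nonnegative linear combination of the tensors $\mathcal{V}^{c, i_1\dots i_m}$ for $c \in \{0,1\}$ and multi-indices $(i_1,\dots,i_m)$, i.e., $DD^+_{m,n}$ equals the convex conic hull of the set $\mathbb{E}_{m,n}$ of these generator tensors. -/
open Finset

/-- `A ∈ DD⁺_{m,n}`: symmetric and each diagonal entry dominates the sum of the absolute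
values of the off-diagonal entries on its slice (the diagonal is then nonnegative). -/
def IsDDplus {m n : ℕ} (hm : 0 < m) (A : Idx m n → ℝ) : Prop :=
  IsSymmetric A ∧ ∀ i : Fin n, rowSum hm A i ≤ A (diagIdx i)

/-- The generator tensor `𝒱^{c, ĵ}`: if `ĵ` is diagonal, it is the unit diagonal tensor for
`c = false` and zero for `c = true`; otherwise its entries at permutations of `ĵ` equal
`(-1)^c`, its diagonal entries equal the sum of absolute values of the off-diagonal entries
on the corresponding slice, and all other entries vanish. -/
def genV {m n : ℕ} (hm : 0 < m) (c : Bool) (jh : Idx m n) : Idx m n → ℝ :=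
  fun j =>
    if ∃ i : Fin n, jh = diagIdx i then
      (if c = false ∧ j = jh then 1 else 0)
    else if ∃ i : Fin n, j = diagIdx i then
      ((Finset.univ.filter (fun p : Idx m n =>
        (∃ σ : Equiv.Perm (Fin m), p = jh ∘ σ) ∧ p ⟨0, hm⟩ = j ⟨0, hm⟩)).card : ℝ)
    else if ∃ σ : Equiv.Perm (Fin m), j = jh ∘ σ then (if c then -1 else 1)
    else 0

/-!
Every generator is symmetric and diagonally dominant, and both properties survive nonnegative
combinations, since the off-diagonal absolute row sums are subadditive and positively homogeneous.
Conversely, for `A ∈ DD⁺` give every non-constant index `ĵ` the weights `(a_ĵ)⁺ / |O(ĵ)|` and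
`(a_ĵ)⁻ / |O(ĵ)|` on `𝒱^{0,ĵ}` and `𝒱^{1,ĵ}`, where `O(ĵ)` is the orbit of `ĵ` under permutations
(all indices of an orbit give the same generator, hence the division). Summing over an orbit
recovers the off-diagonal entries of `A`; the diagonal entries so produced add up to the row sums
of `|A|`, and the slack `a_{i…i} - rowSum_i ≥ 0` goes to the unit tensors `𝒱^{0,i…i}`.
-/

section

variable {m n : ℕ}

section PermOrbit

abbrev IsDiagIdx (j : Idx m n) : Prop := ∃ i, j = diagIdx i

def permOrbit (jh : Idx m n) : Finset (Idx m n) :=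
  univ.filter fun p => ∃ σ : Equiv.Perm (Fin m), p = jh ∘ σ

lemma mem_permOrbit {jh p : Idx m n} :
    p ∈ permOrbit jh ↔ ∃ σ : Equiv.Perm (Fin m), p = jh ∘ σ := by
  simp [permOrbit]

lemma mem_permOrbit_self (jh : Idx m n) : jh ∈ permOrbit jh := mem_permOrbit.2 ⟨1, rfl⟩

lemma comp_mem_permOrbit (jh : Idx m n) (σ : Equiv.Perm (Fin m)) : jh ∘ σ ∈ permOrbit jh :=
  mem_permOrbit.2 ⟨σ, rfl⟩

lemma mem_permOrbit_comm {jh p : Idx m n} : p ∈ permOrbit jh ↔ jh ∈ permOrbit p := by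
  suffices ∀ a b : Idx m n, a ∈ permOrbit b → b ∈ permOrbit a from ⟨this _ _, this _ _⟩
  intro a b h
  obtain ⟨σ, rfl⟩ := mem_permOrbit.1 h
  exact mem_permOrbit.2 ⟨σ⁻¹, by funext k; simp⟩

lemma permOrbit_eq_of_mem {jh p : Idx m n} (h : p ∈ permOrbit jh) :
    permOrbit p = permOrbit jh := by
  obtain ⟨σ, rfl⟩ := mem_permOrbit.1 h
  ext q
  simp only [mem_permOrbit]
  constructor
  · rintro ⟨τ, rfl⟩
    exact ⟨σ * τ, rfl⟩
  · rintro ⟨τ, rfl⟩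
    exact ⟨σ⁻¹ * τ, by funext k; simp⟩

lemma comp_mem_permOrbit_iff {jh j : Idx m n} (σ : Equiv.Perm (Fin m)) :
    j ∘ σ ∈ permOrbit jh ↔ j ∈ permOrbit jh := by
  rw [mem_permOrbit_comm, permOrbit_eq_of_mem (comp_mem_permOrbit j σ), ← mem_permOrbit_comm]

lemma card_permOrbit_pos (jh : Idx m n) : 0 < #(permOrbit jh) :=
  card_pos.2 ⟨jh, mem_permOrbit_self jh⟩

lemma isDiagIdx_iff_of_mem_permOrbit {jh p : Idx m n} (h : p ∈ permOrbit jh) :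
    IsDiagIdx p ↔ IsDiagIdx jh := by
  suffices ∀ a b : Idx m n, a ∈ permOrbit b → IsDiagIdx b → IsDiagIdx a from
    ⟨this _ _ (mem_permOrbit_comm.1 h), this _ _ h⟩
  rintro a b hab ⟨i, rfl⟩
  obtain ⟨σ, rfl⟩ := mem_permOrbit.1 hab
  exact ⟨i, rfl⟩

lemma IsSymmetric.apply_eq_of_mem_permOrbit {A : Idx m n → ℝ} (hA : IsSymmetric A)
    {jh p : Idx m n} (h : p ∈ permOrbit jh) : A p = A jh := by
  obtain ⟨σ, rfl⟩ := mem_permOrbit.1 h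
  exact hA σ jh

lemma IsSymmetric.abs {A : Idx m n → ℝ} (hA : IsSymmetric A) : IsSymmetric fun j => |A j| :=
  fun σ j => congrArg (fun x : ℝ => |x|) (hA σ j)

lemma IsSymmetric.sum_ite_mem_permOrbit {A : Idx m n → ℝ} (hA : IsSymmetric A) (p : Idx m n) :
    ∑ jh, (if p ∈ permOrbit jh then A jh / #(permOrbit jh) else 0) = A p := by
  have horbit : univ.filter (fun jh => p ∈ permOrbit jh) = permOrbit p := by
    ext jh
    simp [mem_permOrbit_comm (jh := jh)]
  have hconst : ∀ jh ∈ permOrbit p, A jh / #(permOrbit jh) = A p / #(permOrbit p) := by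
    intro jh h
    rw [hA.apply_eq_of_mem_permOrbit h, permOrbit_eq_of_mem h]
  rw [← sum_filter, horbit, sum_congr rfl hconst, sum_const, nsmul_eq_mul,
    mul_div_cancel₀ _ (Nat.cast_ne_zero.2 (card_permOrbit_pos p).ne')]

end PermOrbit

def offDiagSlice (hm : 0 < m) (i : Fin n) : Finset (Idx m n) :=
  univ.filter fun j => j ⟨0, hm⟩ = i ∧ j ≠ diagIdx i

lemma rowSum_eq_sum_offDiagSlice (hm : 0 < m) (A : Idx m n → ℝ) (i : Fin n) :
    rowSum hm A i = ∑ j ∈ offDiagSlice hm i, |A j| := rfl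

lemma not_isDiagIdx_of_mem_offDiagSlice {hm : 0 < m} {i : Fin n} {j : Idx m n}
    (h : j ∈ offDiagSlice hm i) : ¬IsDiagIdx j := by
  rintro ⟨i', rfl⟩
  obtain ⟨h0, hne⟩ := (mem_filter.1 h).2
  exact hne (congrArg diagIdx h0)

section Generators

variable (hm : 0 < m) (c : Bool) {jh : Idx m n}

lemma genV_of_isDiagIdx (hd : IsDiagIdx jh) (j : Idx m n) :
    genV hm c jh j = if c = false ∧ j = jh then 1 else 0 := by
  simp only [genV]
  rw [if_pos hd]

lemma genV_of_not_isDiagIdx (hd : ¬IsDiagIdx jh) {j : Idx m n} (hj : ¬IsDiagIdx j) :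
    genV hm c jh j = if j ∈ permOrbit jh then (if c then -1 else 1) else 0 := by
  simp only [genV, mem_permOrbit]
  rw [if_neg hd, if_neg hj]

lemma genV_diagIdx_of_not_isDiagIdx (hd : ¬IsDiagIdx jh) (i : Fin n) :
    genV hm c jh (diagIdx i) = #((offDiagSlice hm i).filter (· ∈ permOrbit jh)) := by
  simp only [genV]
  rw [if_neg hd, if_pos ⟨i, rfl⟩, offDiagSlice, filter_filter]
  congr 2
  ext p
  simp only [mem_filter, mem_univ, true_and, ← mem_permOrbit]
  constructor
  · rintro ⟨hp, h0⟩
    refine ⟨⟨h0, ?_⟩, hp⟩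
    rintro rfl
    exact hd ((isDiagIdx_iff_of_mem_permOrbit hp).1 ⟨i, rfl⟩)
  · rintro ⟨⟨h0, -⟩, hp⟩
    exact ⟨hp, h0⟩

lemma isSymmetric_genV (jh : Idx m n) : IsSymmetric (genV hm c jh) := by
  intro σ j
  by_cases hj : IsDiagIdx j
  · obtain ⟨i, rfl⟩ := hj
    rfl
  have hjσ : ¬IsDiagIdx (j ∘ σ) := by
    rwa [isDiagIdx_iff_of_mem_permOrbit (comp_mem_permOrbit j σ)]
  by_cases hd : IsDiagIdx jh
  · rw [genV_of_isDiagIdx hm c hd, genV_of_isDiagIdx hm c hd, if_neg, if_neg] <;>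
      rintro ⟨-, rfl⟩ <;> contradiction
  · simp only [genV_of_not_isDiagIdx hm c hd hj, genV_of_not_isDiagIdx hm c hd hjσ,
      comp_mem_permOrbit_iff]

lemma rowSum_genV_le (jh : Idx m n) (i : Fin n) :
    rowSum hm (genV hm c jh) i ≤ genV hm c jh (diagIdx i) := by
  rw [rowSum_eq_sum_offDiagSlice]
  by_cases hd : IsDiagIdx jh
  · have hzero : ∀ j ∈ offDiagSlice hm i, |genV hm c jh j| = 0 := by
      intro j hj
      rw [genV_of_isDiagIdx hm c hd, if_neg, abs_zero]
      rintro ⟨-, rfl⟩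
      exact not_isDiagIdx_of_mem_offDiagSlice hj hd
    rw [sum_congr rfl hzero, sum_const_zero, genV_of_isDiagIdx hm c hd]
    split_ifs <;> norm_num
  · have habs : ∀ j ∈ offDiagSlice hm i,
        |genV hm c jh j| = if j ∈ permOrbit jh then 1 else 0 := by
      intro j hj
      rw [genV_of_not_isDiagIdx hm c hd (not_isDiagIdx_of_mem_offDiagSlice hj)]
      split_ifs <;> simp
    rw [sum_congr rfl habs, sum_boole, genV_diagIdx_of_not_isDiagIdx hm c hd]

lemma isDDplus_genV (jh : Idx m n) : IsDDplus hm (genV hm c jh) :=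
  ⟨isSymmetric_genV hm c jh, rowSum_genV_le hm c jh⟩

end Generators

section ConicCombination

variable {ι : Type*} {s : Finset ι} {lam : ι → ℝ} {V : ι → Idx m n → ℝ}

lemma rowSum_sum_mul_le (hm : 0 < m) (hlam : ∀ q ∈ s, 0 ≤ lam q) (i : Fin n) :
    rowSum hm (fun j => ∑ q ∈ s, lam q * V q j) i ≤ ∑ q ∈ s, lam q * rowSum hm (V q) i := by
  simp only [rowSum_eq_sum_offDiagSlice, mul_sum]
  rw [sum_comm]
  refine sum_le_sum fun j _ => (abs_sum_le_sum_abs _ _).trans (le_of_eq ?_)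
  refine sum_congr rfl fun q hq => ?_
  rw [abs_mul, abs_of_nonneg (hlam q hq)]

lemma isDDplus_sum_mul (hm : 0 < m) (hlam : ∀ q ∈ s, 0 ≤ lam q)
    (hV : ∀ q ∈ s, IsDDplus hm (V q)) : IsDDplus hm fun j => ∑ q ∈ s, lam q * V q j := by
  refine ⟨fun σ j => sum_congr rfl fun q hq => by rw [(hV q hq).1 σ j], fun i => ?_⟩
  calc rowSum hm (fun j => ∑ q ∈ s, lam q * V q j) i
      ≤ ∑ q ∈ s, lam q * rowSum hm (V q) i := rowSum_sum_mul_le hm hlam i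
    _ ≤ ∑ q ∈ s, lam q * V q (diagIdx i) :=
        sum_le_sum fun q hq => mul_le_mul_of_nonneg_left ((hV q hq).2 i) (hlam q hq)

end ConicCombination

section Decomposition

variable (hm : 0 < m) (A : Idx m n → ℝ)

noncomputable def conicCoeff : Bool × Idx m n → ℝ
  | (false, jh) =>
    if IsDiagIdx jh then A jh - rowSum hm A (jh ⟨0, hm⟩) else (A jh)⁺ / #(permOrbit jh)
  | (true, jh) => if IsDiagIdx jh then 0 else (A jh)⁻ / #(permOrbit jh)

lemma conicCoeff_nonneg {A : Idx m n → ℝ} (hdd : ∀ i, rowSum hm A i ≤ A (diagIdx i))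
    (q : Bool × Idx m n) : 0 ≤ conicCoeff hm A q := by
  obtain ⟨_ | _, jh⟩ := q <;> simp only [conicCoeff] <;> split_ifs with hd
  · obtain ⟨i, rfl⟩ := hd
    exact sub_nonneg.2 (hdd i)
  · exact div_nonneg (posPart_nonneg _) (Nat.cast_nonneg _)
  · exact le_rfl
  · exact div_nonneg (negPart_nonneg _) (Nat.cast_nonneg _)

lemma conicCoeff_mul_genV_add_of_not_isDiagIdx {j : Idx m n} (hj : ¬IsDiagIdx j)
    (jh : Idx m n) :
    conicCoeff hm A (true, jh) * genV hm true jh j + conicCoeff hm A (false, jh) * genV hm false jh j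
      = if j ∈ permOrbit jh then A jh / #(permOrbit jh) else 0 := by
  by_cases hd : IsDiagIdx jh
  · have hne : j ≠ jh := fun h => hj (h ▸ hd)
    have hnot : j ∉ permOrbit jh := fun h => hj ((isDiagIdx_iff_of_mem_permOrbit h).2 hd)
    simp [genV_of_isDiagIdx hm _ hd, hne, hnot]
  · rw [genV_of_not_isDiagIdx hm _ hd hj, genV_of_not_isDiagIdx hm _ hd hj]
    by_cases h : j ∈ permOrbit jh
    · simp only [conicCoeff, if_neg hd, if_pos h, if_true, Bool.false_eq_true, if_false]
      linear_combination (posPart_sub_negPart (A jh)) / (#(permOrbit jh) : ℝ)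
    · simp only [if_neg h, mul_zero, add_zero]

lemma conicCoeff_mul_genV_add_diagIdx (i : Fin n) (jh : Idx m n) :
    conicCoeff hm A (true, jh) * genV hm true jh (diagIdx i)
        + conicCoeff hm A (false, jh) * genV hm false jh (diagIdx i)
      = (if jh = diagIdx i then A (diagIdx i) - rowSum hm A i else 0)
        + ∑ p ∈ offDiagSlice hm i, if p ∈ permOrbit jh then |A jh| / #(permOrbit jh) else 0 := by
  by_cases hd : IsDiagIdx jh
  · have hzero : ∀ p ∈ offDiagSlice hm i,
        (if p ∈ permOrbit jh then |A jh| / #(permOrbit jh) else 0) = 0 := fun p hp =>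
      if_neg fun h => not_isDiagIdx_of_mem_offDiagSlice hp ((isDiagIdx_iff_of_mem_permOrbit h).2 hd)
    rw [sum_congr rfl hzero, sum_const_zero, genV_of_isDiagIdx hm _ hd,
      genV_of_isDiagIdx hm _ hd]
    by_cases hi : jh = diagIdx i
    · subst hi
      simp [conicCoeff, diagIdx]
    · simp [hi, Ne.symm hi]
  · have hi : jh ≠ diagIdx i := fun h => hd ⟨i, h⟩
    rw [genV_diagIdx_of_not_isDiagIdx hm _ hd, genV_diagIdx_of_not_isDiagIdx hm _ hd,
      if_neg hi, ← sum_filter, sum_const, nsmul_eq_mul, ← posPart_add_negPart (A jh)]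
    simp only [conicCoeff, if_neg hd]
    ring

lemma sum_conicCoeff_mul_genV {A : Idx m n → ℝ} (hA : IsSymmetric A) (j : Idx m n) :
    ∑ q : Bool × Idx m n, conicCoeff hm A q * genV hm q.1 q.2 j = A j := by
  simp only [Fintype.sum_prod_type_right, Fintype.sum_bool]
  by_cases hj : IsDiagIdx j
  · obtain ⟨i, rfl⟩ := hj
    rw [sum_congr rfl fun jh _ => conicCoeff_mul_genV_add_diagIdx hm A i jh, sum_add_distrib,
      sum_ite_eq' univ, if_pos (mem_univ _), sum_comm, rowSum_eq_sum_offDiagSlice,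
      sum_congr rfl fun p _ => hA.abs.sum_ite_mem_permOrbit p, sub_add_cancel]
  · rw [sum_congr rfl fun jh _ => conicCoeff_mul_genV_add_of_not_isDiagIdx hm A hj jh,
      hA.sum_ite_mem_permOrbit]

end Decomposition

end

/-- `DD⁺_{m,n}` equals the convex conic hull of the generator tensors `𝒱^{c,ĵ}`. -/
theorem DDplus_eq_conicHull (m n : ℕ) (hm : 0 < m) (A : Idx m n → ℝ) :
    IsDDplus hm A ↔ ∃ lam : Bool × Idx m n → ℝ, (∀ q, 0 ≤ lam q) ∧
      ∀ j : Idx m n, A j = ∑ q : Bool × Idx m n, lam q * genV hm q.1 q.2 j := by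
  constructor
  · rintro ⟨hA, hdd⟩
    exact ⟨conicCoeff hm A, conicCoeff_nonneg hm hdd,
      fun j => (sum_conicCoeff_mul_genV hm hA j).symm⟩
  · rintro ⟨lam, hlam, hA⟩
    obtain rfl : A = fun j => ∑ q : Bool × Idx m n, lam q * genV hm q.1 q.2 j := funext hA
    exact isDDplus_sum_mul hm (fun q _ => hlam q) fun q _ => isDDplus_genV hm q.1 q.2
end

section
/- Let $n \in \mathbb{N}$ and let $\mathcal{A}$ be a symmetric $n \times n$ matrix ($m = 2$ case). Then $\mathcal{A}$ is a GDD$^+$ matrix (i.e., its diagonal is nonnegative and there exist $d_1,\dots,d_n > 0$ such that $|a_{ii}| d_i^2 \geq \sum_{j \neq i} |a_{ij}| d_i d_j$ for all $i$) if and only if there exist nonnegative reals $b^{(i,j)}_i, b^{(i,j)}_j$ for each pair $i < j$ such that $b^{(i,j)}_i b^{(i,j)}_j \geq a_{ij}^2$ for all $i < j$, and $a_{ii} \geq \sum_{j \neq i} b^{(\min(i,j),\max(i,j))}_i$ for all $i$. -/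
open Finset Matrix

/-!
Both sides say that the comparison matrix `C` of `A` (`|a_ii|` on the diagonal, `-|a_ij|` off it)
admits a positive vector `d` with `C d ≥ 0`. Given such a `d`, the numbers
`b_ij = |a_ij| d_j / d_i` satisfy `b_ij b_ji = a_ij²`. Conversely, the bounds on the `b_ij` make
`C` positive semidefinite, because its quadratic form dominates the sum over pairs `i < j` of
the nonnegative binary forms `b_ij x_i² - 2 |a_ij| x_i x_j + b_ji x_j²`. A positive semidefinite
matrix with nonpositive off-diagonal entries has such a `d`: induct on the size, passing to the
Schur complement of the first diagonal entry, or discarding the first row when it vanishes off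
the diagonal.
-/

theorem two_mul_mul_mul_le_of_sq_le_mul {a b c : ℝ} (hb : 0 ≤ b) (hc : 0 ≤ c) (h : a ^ 2 ≤ b * c)
    (u v : ℝ) : 2 * a * u * v ≤ b * u ^ 2 + c * v ^ 2 := by
  rcases hb.eq_or_lt with rfl | hb
  · obtain rfl : a = 0 := by nlinarith [sq_nonneg a]
    nlinarith [mul_nonneg hc (sq_nonneg v)]
  · refine le_of_mul_le_mul_left ?_ hb
    nlinarith [sq_nonneg (b * u - a * v), mul_nonneg (sub_nonneg.2 h) (sq_nonneg v)]

theorem sum_sum_erase_nonneg_of_add_swap_nonneg {ι : Type*} [Fintype ι] [DecidableEq ι]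
    {f : ι → ι → ℝ} (hf : ∀ i j, i ≠ j → 0 ≤ f i j + f j i) :
    0 ≤ ∑ i, ∑ j ∈ univ.erase i, f i j := by
  have hswap : ∑ i, ∑ j ∈ univ.erase i, f i j = ∑ i, ∑ j ∈ univ.erase i, f j i :=
    sum_comm' fun i j => by simp [ne_comm]
  have hsum : 0 ≤ ∑ i, ∑ j ∈ univ.erase i, (f i j + f j i) :=
    sum_nonneg fun i _ => sum_nonneg fun j hj => hf i j (ne_of_mem_erase hj).symm
  simp only [sum_add_distrib, ← hswap] at hsum
  linarith

namespace Matrix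

variable {ι : Type*} [DecidableEq ι]

def comparisonMatrix (A : Matrix ι ι ℝ) : Matrix ι ι ℝ :=
  of fun i j => if i = j then |A i i| else -|A i j|

theorem comparisonMatrix_apply_nonpos_of_ne (A : Matrix ι ι ℝ) {i j : ι} (hij : i ≠ j) :
    A.comparisonMatrix i j ≤ 0 := by
  simp [comparisonMatrix, hij]

theorem IsSymm.comparisonMatrix {A : Matrix ι ι ℝ} (hA : A.IsSymm) :
    A.comparisonMatrix.IsSymm := by
  ext i j
  rcases eq_or_ne i j with rfl | hij
  · rfl
  · simp [Matrix.comparisonMatrix, hij, hij.symm, hA.apply i j]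

variable [Fintype ι]

theorem comparisonMatrix_mulVec_apply (A : Matrix ι ι ℝ) (x : ι → ℝ) (i : ι) :
    (A.comparisonMatrix *ᵥ x) i = |A i i| * x i - ∑ j ∈ univ.erase i, |A i j| * x j := by
  rw [mulVec, dotProduct, ← add_sum_erase _ _ (mem_univ i), sub_eq_add_neg, ← sum_neg_distrib]
  refine congrArg₂ (· + ·) (by simp [comparisonMatrix]) (sum_congr rfl fun j hj => ?_)
  simp [comparisonMatrix, (ne_of_mem_erase hj).symm]

theorem sum_erase_abs_mul_le_iff_comparisonMatrix_mulVec_nonneg (A : Matrix ι ι ℝ) {d : ι → ℝ}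
    {i : ι} (hd : 0 < d i) :
    ∑ j ∈ univ.erase i, |A i j| * d i * d j ≤ |A i i| * d i ^ 2 ↔
      0 ≤ (A.comparisonMatrix *ᵥ d) i := by
  have hleft :
      ∑ j ∈ univ.erase i, |A i j| * d i * d j = d i * ∑ j ∈ univ.erase i, |A i j| * d j := by
    rw [mul_sum]; exact sum_congr rfl fun j _ => by ring
  rw [comparisonMatrix_mulVec_apply, sub_nonneg, hleft, sq, ← mul_assoc, mul_comm _ (d i),
    mul_le_mul_iff_right₀ hd]

theorem IsSymm.exists_sq_le_mul_of_comparisonMatrix_mulVec_nonneg {A : Matrix ι ι ℝ}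
    (hA : A.IsSymm) {d : ι → ℝ} (hd : ∀ i, 0 < d i) (hAd : 0 ≤ A.comparisonMatrix *ᵥ d) :
    ∃ B : ι → ι → ℝ, (∀ i j, 0 ≤ B i j) ∧ (∀ i j, A i j ^ 2 ≤ B i j * B j i) ∧
      ∀ i, ∑ j ∈ univ.erase i, B i j ≤ |A i i| := by
  refine ⟨fun i j => |A i j| * d j / d i,
    fun i j => div_nonneg (mul_nonneg (abs_nonneg _) (hd j).le) (hd i).le,
    fun i j => ?_, fun i => ?_⟩
  · have hi := (hd i).ne'
    have hj := (hd j).ne'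
    refine le_of_eq ?_
    dsimp only
    rw [hA.apply i j]
    field_simp
    rw [sq_abs]
  · have hrow := hAd i
    rw [Pi.zero_apply, comparisonMatrix_mulVec_apply, sub_nonneg] at hrow
    rw [← sum_div, div_le_iff₀ (hd i)]
    exact hrow

theorem IsSymm.posSemidef_comparisonMatrix {A : Matrix ι ι ℝ} (hA : A.IsSymm) {B : ι → ι → ℝ}
    (hB : ∀ i j, i ≠ j → 0 ≤ B i j) (hAB : ∀ i j, i ≠ j → A i j ^ 2 ≤ B i j * B j i)
    (hdiag : ∀ i, ∑ j ∈ univ.erase i, B i j ≤ |A i i|) : A.comparisonMatrix.PosSemidef := by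
  refine .of_dotProduct_mulVec_nonneg hA.comparisonMatrix fun x => ?_
  have hpair : 0 ≤ ∑ i, ∑ j ∈ univ.erase i, (B i j * x i ^ 2 - |A i j| * x i * x j) := by
    refine sum_sum_erase_nonneg_of_add_swap_nonneg fun i j hij => ?_
    have := two_mul_mul_mul_le_of_sq_le_mul (hB i j hij) (hB j i hij.symm)
      ((sq_abs (A i j)).trans_le (hAB i j hij)) (x i) (x j)
    rw [hA.apply i j]
    linarith
  refine hpair.trans ?_
  calc ∑ i, ∑ j ∈ univ.erase i, (B i j * x i ^ 2 - |A i j| * x i * x j)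
      ≤ ∑ i, x i * (|A i i| * x i - ∑ j ∈ univ.erase i, |A i j| * x j) := by
        refine sum_le_sum fun i _ => ?_
        have hdiag_i := mul_le_mul_of_nonneg_right (hdiag i) (sq_nonneg (x i))
        have hoff : ∑ j ∈ univ.erase i, |A i j| * x i * x j
            = x i * ∑ j ∈ univ.erase i, |A i j| * x j := by
          rw [mul_sum]; exact sum_congr rfl fun j _ => by ring
        rw [sum_sub_distrib, ← sum_mul, hoff]
        linarith
    _ = star x ⬝ᵥ A.comparisonMatrix *ᵥ x := by
        simp [dotProduct, comparisonMatrix_mulVec_apply]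

section SchurComplement

variable {n : ℕ}

theorem mulVec_cons_zero (M : Matrix (Fin (n + 1)) (Fin (n + 1)) ℝ) (t : ℝ) (y : Fin n → ℝ) :
    (M *ᵥ Fin.cons t y) 0 = M 0 0 * t + Fin.tail (M 0) ⬝ᵥ y := by
  simp [mulVec, dotProduct, Fin.sum_univ_succ, Fin.tail]

theorem mulVec_cons_succ (M : Matrix (Fin (n + 1)) (Fin (n + 1)) ℝ) (t : ℝ) (y : Fin n → ℝ)
    (k : Fin n) :
    (M *ᵥ Fin.cons t y) k.succ = M k.succ 0 * t + (M.submatrix Fin.succ Fin.succ *ᵥ y) k := by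
  simp [mulVec, dotProduct, Fin.sum_univ_succ]

theorem IsSymm.cons_dotProduct_mulVec_cons {M : Matrix (Fin (n + 1)) (Fin (n + 1)) ℝ}
    (hM : M.IsSymm) (t : ℝ) (y : Fin n → ℝ) :
    Fin.cons t y ⬝ᵥ M *ᵥ Fin.cons t y =
      M 0 0 * t ^ 2 + 2 * t * (Fin.tail (M 0) ⬝ᵥ y) + y ⬝ᵥ M.submatrix Fin.succ Fin.succ *ᵥ y := by
  have hcol : ∑ k, y k * (M k.succ 0 * t) = t * (Fin.tail (M 0) ⬝ᵥ y) := by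
    rw [dotProduct, mul_sum]
    exact sum_congr rfl fun k _ => by rw [Fin.tail, ← hM.apply]; ring
  rw [dotProduct, Fin.sum_univ_succ]
  simp only [Fin.cons_zero, Fin.cons_succ, mulVec_cons_zero, mulVec_cons_succ, mul_add,
    sum_add_distrib, hcol, dotProduct]
  ring

theorem PosSemidef.tail_eq_zero {M : Matrix (Fin (n + 1)) (Fin (n + 1)) ℝ} (hM : M.PosSemidef)
    (h0 : M 0 0 = 0) : Fin.tail (M 0) = 0 := by
  set b := Fin.tail (M 0)
  have hform (t : ℝ) : 0 ≤ 2 * t * (b ⬝ᵥ b) + b ⬝ᵥ M.submatrix Fin.succ Fin.succ *ᵥ b := by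
    have := hM.dotProduct_mulVec_nonneg (Fin.cons t b)
    simpa [(isHermitian_iff_isSymm.1 hM.isHermitian).cons_dotProduct_mulVec_cons, h0] using this
  rw [← dotProduct_self_eq_zero]
  by_contra hbb
  have hpos : 0 < b ⬝ᵥ b := (dotProduct_self_star_nonneg b).lt_of_ne' (by simpa using hbb)
  have := hform (-(b ⬝ᵥ M.submatrix Fin.succ Fin.succ *ᵥ b + 1) / (2 * (b ⬝ᵥ b)))
  field_simp at this
  linarith

noncomputable def schurComplementAtZero (M : Matrix (Fin (n + 1)) (Fin (n + 1)) ℝ) :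
    Matrix (Fin n) (Fin n) ℝ :=
  M.submatrix Fin.succ Fin.succ - (M 0 0)⁻¹ • vecMulVec (Fin.tail (M 0)) (Fin.tail (M 0))

theorem schurComplementAtZero_mulVec (M : Matrix (Fin (n + 1)) (Fin (n + 1)) ℝ)
    (y : Fin n → ℝ) :
    M.schurComplementAtZero *ᵥ y = M.submatrix Fin.succ Fin.succ *ᵥ y -
      ((M 0 0)⁻¹ * (Fin.tail (M 0) ⬝ᵥ y)) • Fin.tail (M 0) := by
  rw [schurComplementAtZero, sub_mulVec, smul_mulVec, vecMulVec_mulVec, op_smul_eq_smul, smul_smul]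

theorem schurComplementAtZero_apply_nonpos_of_ne {M : Matrix (Fin (n + 1)) (Fin (n + 1)) ℝ}
    (hM : ∀ i j, i ≠ j → M i j ≤ 0) (h0 : 0 ≤ M 0 0) {i j : Fin n} (hij : i ≠ j) :
    M.schurComplementAtZero i j ≤ 0 := by
  have hN : M i.succ j.succ ≤ 0 := hM _ _ (Fin.succ_injective _ |>.ne hij)
  have hbb : 0 ≤ (M 0 0)⁻¹ * (M 0 i.succ * M 0 j.succ) :=
    mul_nonneg (inv_nonneg.2 h0)
      (mul_nonneg_of_nonpos_of_nonpos (hM _ _ i.succ_ne_zero.symm) (hM _ _ j.succ_ne_zero.symm))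
  simp only [schurComplementAtZero, sub_apply, smul_apply, submatrix_apply, vecMulVec_apply,
    Fin.tail, smul_eq_mul]
  linarith

theorem PosSemidef.schurComplementAtZero {M : Matrix (Fin (n + 1)) (Fin (n + 1)) ℝ}
    (hM : M.PosSemidef) (h0 : 0 < M 0 0) : M.schurComplementAtZero.PosSemidef := by
  have hsymm := isHermitian_iff_isSymm.1 hM.isHermitian
  refine .of_dotProduct_mulVec_nonneg (isHermitian_iff_isSymm.2 (IsSymm.ext fun i j => ?_))
    fun y => ?_
  · simp only [Matrix.schurComplementAtZero, sub_apply, smul_apply, submatrix_apply,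
      vecMulVec_apply, hsymm.apply i.succ j.succ, mul_comm]
  · have hform := hM.dotProduct_mulVec_nonneg (Fin.cons (-(Fin.tail (M 0) ⬝ᵥ y) / M 0 0) y)
    rw [star_trivial, hsymm.cons_dotProduct_mulVec_cons] at hform
    rw [star_trivial, schurComplementAtZero_mulVec, dotProduct_sub, dotProduct_smul, smul_eq_mul,
      dotProduct_comm y (Fin.tail (M 0))]
    have hmin : M 0 0 * (-(Fin.tail (M 0) ⬝ᵥ y) / M 0 0) ^ 2
        + 2 * (-(Fin.tail (M 0) ⬝ᵥ y) / M 0 0) * (Fin.tail (M 0) ⬝ᵥ y)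
        = -((M 0 0)⁻¹ * (Fin.tail (M 0) ⬝ᵥ y) * (Fin.tail (M 0) ⬝ᵥ y)) := by
      field_simp; ring
    linarith

end SchurComplement

theorem PosSemidef.exists_pos_mulVec_nonneg_of_apply_nonpos :
    ∀ {n : ℕ} {M : Matrix (Fin n) (Fin n) ℝ}, M.PosSemidef → (∀ i j, i ≠ j → M i j ≤ 0) →
      ∃ d : Fin n → ℝ, (∀ i, 0 < d i) ∧ 0 ≤ M *ᵥ d
  | 0, _, _, _ => ⟨0, fun i => i.elim0, fun i => i.elim0⟩
  | n + 1, M, hM, hZ => by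
    have hsymm := isHermitian_iff_isSymm.1 hM.isHermitian
    by_cases hb : Fin.tail (M 0) = 0
    · obtain ⟨d, hd, hMd⟩ :=
        exists_pos_mulVec_nonneg_of_apply_nonpos (hM.submatrix Fin.succ)
          fun i j hij => hZ _ _ (Fin.succ_injective _ |>.ne hij)
      refine ⟨Fin.cons 1 d, Fin.cases one_pos hd, Fin.cases ?_ fun k => ?_⟩
      · simpa [mulVec_cons_zero, hb] using hM.diag_nonneg
      · have hk : M k.succ 0 = 0 := by rw [← hsymm.apply]; exact congrFun hb k
        simpa [mulVec_cons_succ, hk] using hMd k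
    · have ha : 0 < M 0 0 := hM.diag_nonneg.lt_of_ne' fun h => hb (hM.tail_eq_zero h)
      obtain ⟨d, hd, hSd⟩ :=
        exists_pos_mulVec_nonneg_of_apply_nonpos (hM.schurComplementAtZero ha)
          fun i j hij => schurComplementAtZero_apply_nonpos_of_ne hZ ha.le hij
      have hs : Fin.tail (M 0) ⬝ᵥ d < 0 := by
        obtain ⟨k, hk⟩ := Function.ne_iff.1 hb
        refine sum_neg' (fun j _ => ?_) ⟨k, mem_univ k, ?_⟩
        · exact mul_nonpos_of_nonpos_of_nonneg (hZ _ _ j.succ_ne_zero.symm) (hd j).le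
        · exact mul_neg_of_neg_of_pos ((hZ _ _ k.succ_ne_zero.symm).lt_of_ne hk) (hd k)
      -- the first coordinate makes row `0` of `M d` vanish; the other rows are then those of
      -- the Schur complement applied to `d`
      refine ⟨Fin.cons (-(Fin.tail (M 0) ⬝ᵥ d) / M 0 0) d,
        Fin.cases (div_pos (neg_pos.2 hs) ha) hd, Fin.cases ?_ fun k => ?_⟩
      · rw [Pi.zero_apply, mulVec_cons_zero, mul_div_cancel₀ _ ha.ne', neg_add_cancel]
      · have hrow := hSd k
        rw [Pi.zero_apply, schurComplementAtZero_mulVec] at hrow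
        simp only [Pi.sub_apply, Pi.smul_apply, smul_eq_mul, Fin.tail] at hrow
        rw [Pi.zero_apply, mulVec_cons_succ, ← hsymm.apply]
        have hcoef : M 0 k.succ * (-(Fin.tail (M 0) ⬝ᵥ d) / M 0 0)
            = -((M 0 0)⁻¹ * (Fin.tail (M 0) ⬝ᵥ d) * M 0 k.succ) := by ring
        linarith

end Matrix

/-- `B i j` stands for the paper's `b^{(min i j, max i j)}_i`. -/
theorem matrix_GDDplus_iff (n : ℕ) (A : Matrix (Fin n) (Fin n) ℝ) (hsym : A.IsSymm) :
    ((∀ i, 0 ≤ A i i) ∧ ∃ d : Fin n → ℝ, (∀ i, 0 < d i) ∧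
      ∀ i, ∑ j ∈ Finset.univ.erase i, |A i j| * d i * d j ≤ |A i i| * d i ^ 2) ↔
    ∃ B : Fin n → Fin n → ℝ,
      (∀ i j, i ≠ j → 0 ≤ B i j) ∧
      (∀ i j, i < j → (A i j) ^ 2 ≤ B i j * B j i) ∧
      (∀ i, ∑ j ∈ Finset.univ.erase i, B i j ≤ A i i) := by
  have hdom {d : Fin n → ℝ} (hd : ∀ i, 0 < d i) :
      (∀ i, ∑ j ∈ univ.erase i, |A i j| * d i * d j ≤ |A i i| * d i ^ 2) ↔
        0 ≤ A.comparisonMatrix *ᵥ d :=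
    forall_congr' fun i => A.sum_erase_abs_mul_le_iff_comparisonMatrix_mulVec_nonneg (hd i)
  constructor
  · rintro ⟨hdiag, d, hd, hAd⟩
    obtain ⟨B, hB, hBA, hBdiag⟩ :=
      hsym.exists_sq_le_mul_of_comparisonMatrix_mulVec_nonneg hd ((hdom hd).1 hAd)
    exact ⟨B, fun i j _ => hB i j, fun i j _ => hBA i j,
      fun i => (hBdiag i).trans_eq (abs_of_nonneg (hdiag i))⟩
  · rintro ⟨B, hB, hBA, hBdiag⟩
    have hdiag (i : Fin n) : 0 ≤ A i i :=
      (sum_nonneg fun j hj => hB i j (ne_of_mem_erase hj).symm).trans (hBdiag i)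
    have hBA' (i j : Fin n) (hij : i ≠ j) : A i j ^ 2 ≤ B i j * B j i := by
      rcases hij.lt_or_gt with h | h
      · exact hBA i j h
      · rw [← hsym.apply, mul_comm]; exact hBA j i h
    obtain ⟨d, hd, hAd⟩ :=
      (hsym.posSemidef_comparisonMatrix hB hBA' fun i => (hBdiag i).trans (le_abs_self _))
        |>.exists_pos_mulVec_nonneg_of_apply_nonpos
          fun _ _ => A.comparisonMatrix_apply_nonpos_of_ne
    exact ⟨hdiag, d, hd, (hdom hd).2 hAd⟩
end

section
/- For $n \in \mathbb{N}$, a homogeneous quadratic polynomial $p$ in $n$ variables is a DDTH polynomial (degree-2 diagonally dominant tensor homogeneous polynomial) if and only if it can be written as $p(x) = \sum_i \gamma_i x_i^2 + \sum_{i \neq j} \beta^+_{ij} (x_i + x_j)^2 + \sum_{i \neq j} \beta^-_{ij}(x_i - x_j)^2$ for some nonnegative scalars $\gamma_i, \beta^+_{ij}, \beta^-_{ij}$; that is, $DDTH_{2,n} = DSOS_{2,n} \cap \mathbb{H}_2$. -/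
open Finset

open MvPolynomial

/-- The set of distinct values appearing in the multi-index `jh`. -/
def suppIdx {m n : ℕ} (jh : Idx m n) : Finset (Fin n) := Finset.image jh Finset.univ

/-- The multiplicity of the value `p` in the multi-index `jh`. -/
def multIdx {m n : ℕ} (jh : Idx m n) (p : Fin n) : ℕ :=
  (Finset.univ.filter fun k : Fin m => jh k = p).card

/-- The generator polynomial `f^{±}_{i₁…i_m}(x) = ∑_k (m-1 choose α - e_k) x_{j_k}^m
± (m choose α) x_{i₁} ⋯ x_{i_m}` (`c = false` gives `+`, `c = true` gives `-`). -/
noncomputable def fGen (m n : ℕ) (c : Bool) (jh : Idx m n) : MvPolynomial (Fin n) ℝ :=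
  (∑ p ∈ suppIdx jh,
    ((Nat.multinomial (suppIdx jh)
        (fun q => if q = p then multIdx jh q - 1 else multIdx jh q) : ℕ) : ℝ) •
      (X p ^ m : MvPolynomial (Fin n) ℝ)) +
  ((if c then (-1 : ℝ) else 1) * ((Nat.multinomial (suppIdx jh) (multIdx jh) : ℕ) : ℝ)) •
    ∏ k : Fin m, (X (jh k) : MvPolynomial (Fin n) ℝ)

open scoped Classical in
/-- `p` is a diagonally dominant tensor homogeneous (DDTH) polynomial of degree `m`:
a nonnegative combination of the `x_i^m` and the generator polynomials `f^{±}_{i⃗}` over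
nondecreasing non-constant multi-indices `i⃗`. -/
def IsDDTH (m n : ℕ) (p : MvPolynomial (Fin n) ℝ) : Prop :=
  ∃ (γ : Fin n → ℝ) (bp bm : Idx m n → ℝ),
    (∀ i, 0 ≤ γ i) ∧ (∀ jh, 0 ≤ bp jh) ∧ (∀ jh, 0 ≤ bm jh) ∧
    p = (∑ i : Fin n, γ i • (X i ^ m : MvPolynomial (Fin n) ℝ)) +
      ∑ jh : Idx m n,
        (if Monotone jh ∧ ¬ (∃ q : Fin n, jh = diagIdx q) then
          bp jh • fGen m n false jh + bm jh • fGen m n true jh else 0)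

/-- `p` is DSOS: a nonnegative combination of squares of monomials and of squares of sums
and differences of pairs of monomials. -/
def IsDSOS (n : ℕ) (p : MvPolynomial (Fin n) ℝ) : Prop :=
  ∃ (k : ℕ) (mo : Fin k → (Fin n →₀ ℕ)) (γ : Fin k → ℝ) (bp bm : Fin k → Fin k → ℝ),
    (∀ i, 0 ≤ γ i) ∧ (∀ i j, 0 ≤ bp i j) ∧ (∀ i j, 0 ≤ bm i j) ∧
    p = (∑ i : Fin k, γ i • (monomial (mo i) (1 : ℝ)) ^ 2) +
      (∑ i : Fin k, ∑ j : Fin k,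
        bp i j • ((monomial (mo i) (1 : ℝ)) + monomial (mo j) (1 : ℝ)) ^ 2) +
      (∑ i : Fin k, ∑ j : Fin k,
        bm i j • ((monomial (mo i) (1 : ℝ)) - monomial (mo j) (1 : ℝ)) ^ 2)

/-! Both sides are the cone `IsDDQuadForm` of nonnegative combinations of `x_a²`,
`(x_a + x_b)²` and `(x_a - x_b)²`. For `m = 2` the generators `f^±_{ab}` are exactly
`(x_a ± x_b)²`, which gives the DDTH side. A polynomial in the cone is visibly DSOS and quadratic.
Conversely, write a homogeneous quadratic DSOS polynomial as `p = ∑ c_t q_t²` with each `q_t` a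
monomial or a sum or difference of two monomials. Since `p(0) = 0`, every `q_t` with `c_t > 0`
vanishes at `0`, and then the quadratic part of `q_t²` is the square of the linear part of `q_t`,
which is `0`, `x_a²` or `(x_a ± x_b)²`. -/

def IsDDQuadForm (n : ℕ) (p : MvPolynomial (Fin n) ℝ) : Prop :=
  ∃ (γ : Fin n → ℝ) (B C : Fin n → Fin n → ℝ),
    (∀ a, 0 ≤ γ a) ∧ (∀ a b, 0 ≤ B a b) ∧ (∀ a b, 0 ≤ C a b) ∧
    p = (∑ a, γ a • X a ^ 2) + ∑ a, ∑ b, (B a b • (X a + X b) ^ 2 + C a b • (X a - X b) ^ 2)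

namespace IsDDQuadForm

variable {n : ℕ} {p q : MvPolynomial (Fin n) ℝ}

theorem zero : IsDDQuadForm n 0 :=
  ⟨0, 0, 0, fun _ => le_rfl, fun _ _ => le_rfl, fun _ _ => le_rfl, by simp⟩

theorem add (hp : IsDDQuadForm n p) (hq : IsDDQuadForm n q) : IsDDQuadForm n (p + q) := by
  obtain ⟨γ, B, C, hγ, hB, hC, rfl⟩ := hp
  obtain ⟨γ', B', C', hγ', hB', hC', rfl⟩ := hq
  refine ⟨γ + γ', B + B', C + C', fun a => add_nonneg (hγ a) (hγ' a),
    fun a b => add_nonneg (hB a b) (hB' a b), fun a b => add_nonneg (hC a b) (hC' a b), ?_⟩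
  simp only [Pi.add_apply, add_smul, sum_add_distrib]
  abel

theorem sum {ι : Type*} (s : Finset ι) {f : ι → MvPolynomial (Fin n) ℝ}
    (h : ∀ i ∈ s, IsDDQuadForm n (f i)) : IsDDQuadForm n (∑ i ∈ s, f i) :=
  Finset.sum_induction f _ (fun _ _ => add) zero h

theorem smul {c : ℝ} (hc : 0 ≤ c) (hp : IsDDQuadForm n p) : IsDDQuadForm n (c • p) := by
  obtain ⟨γ, B, C, hγ, hB, hC, rfl⟩ := hp
  refine ⟨c • γ, c • B, c • C, fun a => mul_nonneg hc (hγ a),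
    fun a b => mul_nonneg hc (hB a b), fun a b => mul_nonneg hc (hC a b), ?_⟩
  simp only [Pi.smul_apply, smul_eq_mul, smul_add, Finset.smul_sum, mul_smul]

theorem X_sq (a : Fin n) : IsDDQuadForm n (X a ^ 2) := by
  refine ⟨Pi.single a 1, 0, 0, fun t => ?_, fun _ _ => le_rfl, fun _ _ => le_rfl, ?_⟩
  · by_cases h : t = a <;> simp [h]
  · simp [Pi.single_apply]

theorem X_add_X_sq (a b : Fin n) : IsDDQuadForm n ((X a + X b) ^ 2) := by
  refine ⟨0, fun s t => if s = a ∧ t = b then 1 else 0, 0, fun _ => le_rfl,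
    fun s t => by positivity, fun _ _ => le_rfl, ?_⟩
  simp [ite_and, ite_smul]

theorem X_sub_X_sq (a b : Fin n) : IsDDQuadForm n ((X a - X b) ^ 2) := by
  refine ⟨0, 0, fun s t => if s = a ∧ t = b then 1 else 0, fun _ => le_rfl,
    fun _ _ => le_rfl, fun s t => by positivity, ?_⟩
  simp [ite_and, ite_smul]

theorem isHomogeneous (hp : IsDDQuadForm n p) : p.IsHomogeneous 2 := by
  obtain ⟨γ, B, C, -, -, -, rfl⟩ := hp
  have hX (a : Fin n) : (X a : MvPolynomial (Fin n) ℝ).IsHomogeneous 1 := isHomogeneous_X _ a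
  show _ ∈ homogeneousSubmodule (Fin n) ℝ 2
  refine add_mem (sum_mem fun a _ => Submodule.smul_mem _ _ ((hX a).pow 2))
    (sum_mem fun a _ => sum_mem fun b _ => add_mem
      (Submodule.smul_mem _ _ (((hX a).add (hX b)).pow 2))
      (Submodule.smul_mem _ _ (((hX a).sub (hX b)).pow 2)))

theorem isDSOS (hp : IsDDQuadForm n p) : IsDSOS n p := by
  obtain ⟨γ, B, C, hγ, hB, hC, rfl⟩ := hp
  refine ⟨n, fun a => Finsupp.single a 1, γ, B, C, hγ, hB, hC, ?_⟩
  have hX (a : Fin n) : monomial (Finsupp.single a 1) (1 : ℝ) = X a := rfl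
  simp only [hX, sum_add_distrib]
  abel

end IsDDQuadForm

namespace IsDDTH

variable {m n : ℕ} {p q : MvPolynomial (Fin n) ℝ}

theorem zero : IsDDTH m n 0 :=
  ⟨0, 0, 0, fun _ => le_rfl, fun _ => le_rfl, fun _ => le_rfl, by simp⟩

theorem add (hp : IsDDTH m n p) (hq : IsDDTH m n q) : IsDDTH m n (p + q) := by
  obtain ⟨γ, bp, bm, hγ, hbp, hbm, rfl⟩ := hp
  obtain ⟨γ', bp', bm', hγ', hbp', hbm', rfl⟩ := hq
  refine ⟨γ + γ', bp + bp', bm + bm', fun i => add_nonneg (hγ i) (hγ' i),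
    fun jh => add_nonneg (hbp jh) (hbp' jh), fun jh => add_nonneg (hbm jh) (hbm' jh), ?_⟩
  have hsplit (P : Prop) [Decidable P] (x x' y y' : MvPolynomial (Fin n) ℝ) :
      (if P then x + x' + (y + y') else 0) =
        (if P then x + y else 0) + (if P then x' + y' else 0) := by
    split_ifs <;> abel
  simp only [Pi.add_apply, add_smul, hsplit, sum_add_distrib]
  abel

theorem sum {ι : Type*} (s : Finset ι) {f : ι → MvPolynomial (Fin n) ℝ}
    (h : ∀ i ∈ s, IsDDTH m n (f i)) : IsDDTH m n (∑ i ∈ s, f i) :=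
  Finset.sum_induction f _ (fun _ _ => add) zero h

theorem smul {c : ℝ} (hc : 0 ≤ c) (hp : IsDDTH m n p) : IsDDTH m n (c • p) := by
  obtain ⟨γ, bp, bm, hγ, hbp, hbm, rfl⟩ := hp
  refine ⟨c • γ, c • bp, c • bm, fun i => mul_nonneg hc (hγ i),
    fun jh => mul_nonneg hc (hbp jh), fun jh => mul_nonneg hc (hbm jh), ?_⟩
  simp only [Pi.smul_apply, smul_eq_mul, smul_add, Finset.smul_sum, mul_smul, smul_ite, smul_zero]

theorem X_pow (a : Fin n) : IsDDTH m n (X a ^ m) := by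
  refine ⟨Pi.single a 1, 0, 0, fun t => ?_, fun _ => le_rfl, fun _ => le_rfl, ?_⟩
  · by_cases h : t = a <;> simp [h]
  · simp [Pi.single_apply]

end IsDDTH

theorem isDDTH_fGen {m n : ℕ} (c : Bool) {jh : Idx m n}
    (hjh : Monotone jh ∧ ¬ ∃ q, jh = diagIdx q) :
    IsDDTH m n (fGen m n c jh) := by
  have h₀ : (0 : ℝ) ≤ cond c 0 1 ∧ (0 : ℝ) ≤ cond c 1 0 := by cases c <;> norm_num
  refine ⟨0, Pi.single jh (cond c 0 1), Pi.single jh (cond c 1 0), fun _ => le_rfl,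
    fun j => ?_, fun j => ?_, ?_⟩
  · by_cases h : j = jh <;> simp [h, h₀.1]
  · by_cases h : j = jh <;> simp [h, h₀.2]
  rw [Finset.sum_eq_single jh (fun j _ hj => by simp [hj]) (by simp)]
  cases c <;> simp [hjh]

theorem monotone_and_not_diag_iff_lt {n : ℕ} (jh : Idx 2 n) :
    (Monotone jh ∧ ¬ ∃ q, jh = diagIdx q) ↔ jh 0 < jh 1 := by
  have hdiag : (∃ q, jh = diagIdx q) ↔ jh 0 = jh 1 := by
    simp [funext_iff, diagIdx, Fin.forall_fin_two, eq_comm]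
  simp [Fin.monotone_iff_le_succ, hdiag, lt_iff_le_and_ne]

theorem fGen_two {n : ℕ} (c : Bool) {jh : Idx 2 n} (h : jh 0 ≠ jh 1) :
    fGen 2 n c jh =
      X (jh 0) ^ 2 + X (jh 1) ^ 2 + (if c then -2 else 2 : ℝ) • (X (jh 0) * X (jh 1)) := by
  have hsupp : suppIdx jh = {jh 0, jh 1} := by
    ext x; simp [suppIdx, Fin.exists_fin_two, eq_comm]
  have hmult (i : Fin 2) : multIdx jh (jh i) = 1 := Finset.card_eq_one.mpr
    ⟨i, by ext k; fin_cases i <;> fin_cases k <;> simp [h, Ne.symm h]⟩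
  simp [fGen, hsupp, Finset.sum_pair h, Nat.multinomial_insert, h, hmult]

theorem fGen_two_false {n : ℕ} {jh : Idx 2 n} (h : jh 0 ≠ jh 1) :
    fGen 2 n false jh = (X (jh 0) + X (jh 1)) ^ 2 := by
  rw [fGen_two false h, if_neg Bool.false_ne_true, ofNat_smul_eq_nsmul, nsmul_eq_mul]
  ring

theorem fGen_two_true {n : ℕ} {jh : Idx 2 n} (h : jh 0 ≠ jh 1) :
    fGen 2 n true jh = (X (jh 0) - X (jh 1)) ^ 2 := by
  rw [fGen_two true h, if_pos rfl, neg_smul, ofNat_smul_eq_nsmul, nsmul_eq_mul]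
  ring

theorem isDDTH_two_X_add_X_sq {n : ℕ} (a b : Fin n) : IsDDTH 2 n ((X a + X b) ^ 2) := by
  wlog hab : a ≤ b
  · rw [add_comm]; exact this b a (le_of_not_ge hab)
  rcases hab.lt_or_eq with h | rfl
  · simpa [fGen_two_false (jh := ![a, b]) h.ne] using
      isDDTH_fGen false ((monotone_and_not_diag_iff_lt ![a, b]).mpr h)
  · rw [show (X a + X a : MvPolynomial (Fin n) ℝ) ^ 2 = (4 : ℝ) • X a ^ 2 by
      rw [smul_eq_C_mul, map_ofNat]; ring]
    exact .smul (by norm_num) (.X_pow a)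

theorem isDDTH_two_X_sub_X_sq {n : ℕ} (a b : Fin n) : IsDDTH 2 n ((X a - X b) ^ 2) := by
  wlog hab : a ≤ b
  · rw [← neg_sub, neg_sq]; exact this b a (le_of_not_ge hab)
  rcases hab.lt_or_eq with h | rfl
  · simpa [fGen_two_true (jh := ![a, b]) h.ne] using
      isDDTH_fGen true ((monotone_and_not_diag_iff_lt ![a, b]).mpr h)
  · simpa using IsDDTH.zero

theorem isDDTH_two_iff_isDDQuadForm {n : ℕ} {p : MvPolynomial (Fin n) ℝ} :
    IsDDTH 2 n p ↔ IsDDQuadForm n p := by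
  constructor
  · rintro ⟨γ, bp, bm, hγ, hbp, hbm, rfl⟩
    refine .add (.sum _ fun a _ => .smul (hγ a) (.X_sq a)) (.sum _ fun jh _ => ?_)
    split_ifs with hjh
    · rw [monotone_and_not_diag_iff_lt] at hjh
      rw [fGen_two_false hjh.ne, fGen_two_true hjh.ne]
      exact .add (.smul (hbp jh) (.X_add_X_sq _ _)) (.smul (hbm jh) (.X_sub_X_sq _ _))
    · exact .zero
  · rintro ⟨γ, B, C, hγ, hB, hC, rfl⟩
    refine .add (.sum _ fun a _ => .smul (hγ a) (.X_pow a))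
      (.sum _ fun a _ => .sum _ fun b _ => ?_)
    exact .add (.smul (hB a b) (isDDTH_two_X_add_X_sq a b))
      (.smul (hC a b) (isDDTH_two_X_sub_X_sq a b))

theorem MvPolynomial.homogeneousComponent_two_sq {σ R : Type*} [CommSemiring R]
    {q : MvPolynomial σ R} (hq : constantCoeff q = 0) :
    homogeneousComponent 2 (q ^ 2) = homogeneousComponent 1 q ^ 2 := by
  classical
  ext d
  rw [coeff_homogeneousComponent]
  split_ifs with hd
  · rw [sq, sq, coeff_mul, coeff_mul]
    refine sum_congr rfl fun x hx => ?_
    have hdeg : x.1.degree + x.2.degree = 2 := by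
      rw [← map_add, (mem_antidiagonal.mp hx), hd]
    have hq0 (y : σ →₀ ℕ) (hy : y.degree = 0) : coeff y q = 0 := by
      rwa [(Finsupp.degree_eq_zero_iff y).mp hy, ← constantCoeff_eq]
    rw [coeff_homogeneousComponent, coeff_homogeneousComponent]
    split_ifs with h1 h2 h2
    · rfl
    · omega
    · omega
    · rcases Nat.lt_or_gt_of_ne h1 with h | h
      · rw [hq0 x.1 (by omega), zero_mul, zero_mul]
      · rw [hq0 x.2 (by omega), mul_zero, mul_zero]
  · exact (((homogeneousComponent_isHomogeneous 1 q).pow 2).coeff_eq_zero hd).symm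

theorem MvPolynomial.homogeneousComponent_one_monomial_one {σ R : Type*} [CommSemiring R]
    (u : σ →₀ ℕ) :
    homogeneousComponent 1 (monomial u (1 : R)) = 0 ∨
      ∃ a, homogeneousComponent 1 (monomial u (1 : R)) = X a := by
  rw [homogeneousComponent_of_mem ((mem_homogeneousSubmodule _ _).mpr
    (isHomogeneous_monomial (1 : R) rfl))]
  split_ifs with hu
  · obtain ⟨a, rfl⟩ : u ∈ Set.range fun a => Finsupp.single a 1 :=
      Finsupp.range_single_one ▸ hu.symm
    exact Or.inr ⟨a, rfl⟩
  · exact Or.inl rfl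

theorem IsDDQuadForm.sq_add_and_sq_sub {n : ℕ} {ℓ₁ ℓ₂ : MvPolynomial (Fin n) ℝ}
    (h₁ : ℓ₁ = 0 ∨ ∃ a, ℓ₁ = X a) (h₂ : ℓ₂ = 0 ∨ ∃ b, ℓ₂ = X b) :
    IsDDQuadForm n ((ℓ₁ + ℓ₂) ^ 2) ∧ IsDDQuadForm n ((ℓ₁ - ℓ₂) ^ 2) := by
  rcases h₁ with rfl | ⟨a, rfl⟩ <;> rcases h₂ with rfl | ⟨b, rfl⟩
  · simpa using IsDDQuadForm.zero
  · simpa using IsDDQuadForm.X_sq b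
  · simpa using IsDDQuadForm.X_sq a
  · exact ⟨.X_add_X_sq a b, .X_sub_X_sq a b⟩

theorem IsDDQuadForm.of_sum_smul_sq {n : ℕ} {ι : Type*} [Fintype ι] {c : ι → ℝ}
    {q : ι → MvPolynomial (Fin n) ℝ} (hc : ∀ t, 0 ≤ c t)
    (hq : ∀ t, IsDDQuadForm n (homogeneousComponent 1 (q t) ^ 2))
    (hh : (∑ t, c t • q t ^ 2).IsHomogeneous 2) : IsDDQuadForm n (∑ t, c t • q t ^ 2) := by
  have hcq (t : ι) : c t * constantCoeff (q t) ^ 2 = 0 := by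
    have h0 : constantCoeff (∑ t, c t • q t ^ 2) = 0 := by
      rw [constantCoeff_eq]; exact hh.coeff_eq_zero (by simp)
    simp only [map_sum, constantCoeff_smul, map_pow, smul_eq_mul] at h0
    exact (sum_eq_zero_iff_of_nonneg fun t _ => mul_nonneg (hc t) (sq_nonneg _)).mp h0 t
      (mem_univ t)
  rw [← homogeneousComponent_eq_self hh, map_sum]
  refine .sum _ fun t _ => ?_
  rw [map_smul]
  rcases mul_eq_zero.mp (hcq t) with h | h
  · rw [h, zero_smul]; exact .zero
  · rw [homogeneousComponent_two_sq (pow_eq_zero_iff two_ne_zero |>.mp h)]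
    exact .smul (hc t) (hq t)

theorem IsDDQuadForm.of_isDSOS {n : ℕ} {p : MvPolynomial (Fin n) ℝ} (hd : IsDSOS n p)
    (hh : p.IsHomogeneous 2) : IsDDQuadForm n p := by
  obtain ⟨k, mo, γ, bp, bm, hγ, hbp, hbm, rfl⟩ := hd
  set M : Fin k → MvPolynomial (Fin n) ℝ := fun i => monomial (mo i) 1
  let c : Fin k ⊕ (Fin k × Fin k ⊕ Fin k × Fin k) → ℝ :=
    Sum.elim γ (Sum.elim (fun ij => bp ij.1 ij.2) (fun ij => bm ij.1 ij.2))
  let q : Fin k ⊕ (Fin k × Fin k ⊕ Fin k × Fin k) → MvPolynomial (Fin n) ℝ :=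
    Sum.elim M (Sum.elim (fun ij => M ij.1 + M ij.2) (fun ij => M ij.1 - M ij.2))
  have hsum : (∑ i, γ i • M i ^ 2) + (∑ i, ∑ j, bp i j • (M i + M j) ^ 2) +
      (∑ i, ∑ j, bm i j • (M i - M j) ^ 2) = ∑ t, c t • q t ^ 2 := by
    simp [c, q, Fintype.sum_sum_type, Fintype.sum_prod_type, add_assoc]
  rw [hsum] at hh ⊢
  have hlin (i : Fin k) := homogeneousComponent_one_monomial_one (R := ℝ) (mo i)
  refine of_sum_smul_sq ?_ ?_ hh
  · rintro (i | ij | ij) <;> simp [c, hγ, hbp, hbm]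
  · rintro (i | ⟨i, j⟩ | ⟨i, j⟩) <;>
      simp only [q, Sum.elim_inl, Sum.elim_inr, map_add, map_sub]
    · simpa using (sq_add_and_sq_sub (hlin i) (Or.inl rfl)).1
    · exact (sq_add_and_sq_sub (hlin i) (hlin j)).1
    · exact (sq_add_and_sq_sub (hlin i) (hlin j)).2

/-- `DDTH_{2,n} = DSOS_{2,n} ∩ ℍ₂`: a homogeneous quadratic polynomial is DDTH iff it is
DSOS. -/
theorem DDTH2_eq_DSOS_inter_H2 (n : ℕ) (p : MvPolynomial (Fin n) ℝ) :
    IsDDTH 2 n p ↔ (IsDSOS n p ∧ p.IsHomogeneous 2) := by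
  rw [isDDTH_two_iff_isDDQuadForm]
  exact ⟨fun h => ⟨h.isDSOS, h.isHomogeneous⟩, fun h => .of_isDSOS h.1 h.2⟩
end

section
/- Let $m,n \in \mathbb{N}$. A polynomial $p$ in $n$ variables is a DDTH polynomial of degree $m$ if and only if there exists a symmetric diagonally dominant tensor $\mathcal{A} \in DD^+_{m,n}$ (nonnegative diagonal) such that $p(x) = \mathcal{A}x^m = \sum_{i_1,\dots,i_m=1}^n a_{i_1\dots i_m} x_{i_1}\cdots x_{i_m}$. -/
/-!
The map `A ↦ A x^m` from tensors to polynomials is linear, and on a symmetric tensor it only sees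
the entries at sorted indices `i⃗`, each weighted by the size `(m choose α)` of its permutation
orbit. The generator `f^±_{i⃗}` is the image of the tensor `𝒱^{±,i⃗}` that is `±1` on the orbit of
`i⃗` and whose diagonal entries are exactly its row sums; the number of orbit elements starting with
`j_k` is `(m-1 choose α - e_k)`. Since these tensors and the diagonal unit tensors lie in the
convex cone `DD⁺`, every DDTH polynomial comes from `DD⁺`. Conversely, a symmetric `A` is its
diagonal plus `∑ A_{i⃗} 𝟙_{orbit i⃗}`; writing `A_{i⃗} = A⁺ - A⁻` and `|A_{i⃗}| = A⁺ + A⁻` gives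
`A = ∑ (a_{i…i} - r_i) E_i + ∑ (A⁺_{i⃗} 𝒱^{+,i⃗} + A⁻_{i⃗} 𝒱^{-,i⃗})` with `r_i` the `i`-th row
sum, and diagonal dominance is exactly nonnegativity of the coefficients.
-/

open Finset

open MvPolynomial

namespace DDTensor

open Equiv MulAction MvPolynomial

variable {m n : ℕ}

lemma multIdx_comp_perm (j : Idx m n) (σ : Perm (Fin m)) : multIdx (j ∘ σ) = multIdx j := by
  funext q
  exact Finset.card_equiv σ (by simp)

lemma exists_perm_of_multIdx_eq {j j' : Idx m n} (h : multIdx j = multIdx j') :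
    ∃ σ : Perm (Fin m), j' ∘ σ = j := by
  classical
  have e : ∀ q, {k // j k = q} ≃ {k // j' k = q} := fun q =>
    Fintype.equivOfCardEq (by rw [Fintype.card_subtype, Fintype.card_subtype]; exact congrFun h q)
  refine ⟨(sigmaFiberEquiv j).symm.trans ((sigmaCongrRight e).trans (sigmaFiberEquiv j')), ?_⟩
  funext k
  exact (e (j k) ⟨k, rfl⟩).2

lemma multIdx_eq_iff {j j' : Idx m n} :
    multIdx j = multIdx j' ↔ ∃ σ : Perm (Fin m), j' ∘ σ = j :=
  ⟨exists_perm_of_multIdx_eq, fun ⟨σ, h⟩ => h ▸ multIdx_comp_perm j' σ⟩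

lemma sum_multIdx (j : Idx m n) : ∑ q, multIdx j q = m := by
  simpa [multIdx] using (Finset.card_eq_sum_card_fiberwise (f := j) (s := univ) (t := univ)
    (fun _ _ => mem_univ _)).symm

lemma mem_suppIdx {j : Idx m n} {q : Fin n} : q ∈ suppIdx j ↔ multIdx j q ≠ 0 := by
  simp [suppIdx, multIdx]

lemma multinomial_suppIdx {j : Idx m n} {f : Fin n → ℕ} (hf : ∀ q ∉ suppIdx j, f q = 0) :
    Nat.multinomial (suppIdx j) f = Nat.multinomial univ f := by
  classical
  exact Nat.multinomial_congr_of_sdiff (subset_univ _) (fun q hq => hf q (mem_sdiff.1 hq).2)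
    fun _ _ => rfl

/-- Orbit–stabilizer for `Perm (Fin m)` acting on `Idx m n` by precomposition. -/
lemma card_multIdx_eq (j : Idx m n) :
    #{j' : Idx m n | multIdx j' = multIdx j} = Nat.multinomial univ (multIdx j) := by
  classical
  have horbit : orbit (Perm (Fin m))ᵈᵐᵃ j = {j' | multIdx j' = multIdx j} := by
    ext j'
    simp only [mem_orbit_iff, Set.mem_ofPred_eq, multIdx_eq_iff]
    exact ⟨fun ⟨c, hc⟩ => ⟨DomMulAct.mk.symm c, hc⟩, fun ⟨σ, hσ⟩ => ⟨DomMulAct.mk σ, hσ⟩⟩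
  have hstab : Nat.card (stabilizer (Perm (Fin m))ᵈᵐᵃ j) = ∏ q, (multIdx j q).factorial := by
    rw [Nat.card_congr (subtypeEquiv (q := fun σ : Perm (Fin m) => j ∘ σ = j) DomMulAct.mk.symm
      fun _ => DomMulAct.mem_stabilizer_iff), Nat.card_eq_fintype_card, DomMulAct.stabilizer_card]
    simp only [Fintype.card_subtype, multIdx]
  have key := (stabilizer (Perm (Fin m))ᵈᵐᵃ j).card_mul_index
  rw [index_stabilizer, horbit, hstab, Nat.card_congr DomMulAct.mk.symm, Nat.card_perm,
    Nat.card_eq_fintype_card, Fintype.card_fin] at key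
  have spec := Nat.multinomial_spec univ (multIdx j)
  rw [sum_multIdx, ← key, Set.ncard_eq_toFinset_card', Set.toFinset_ofPred] at spec
  exact Nat.eq_of_mul_eq_mul_left (Finset.prod_pos fun _ _ => Nat.factorial_pos _) spec.symm

lemma multIdx_cons (a : Fin n) (t : Idx m n) (r : Fin n) :
    multIdx (Fin.cons a t : Idx (m + 1) n) r = (if a = r then 1 else 0) + multIdx t r := by
  simp only [multIdx, Finset.card_filter, Fin.sum_univ_succ, Fin.cons_zero, Fin.cons_succ]

/-- Dropping the head `q` is a bijection onto the index tuples of multiplicity `α - e_q`. -/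
lemma card_multIdx_eq_and_head_eq (hm : 0 < m) {j : Idx m n} {q : Fin n} (hq : q ∈ suppIdx j) :
    #{j' : Idx m n | multIdx j' = multIdx j ∧ j' ⟨0, hm⟩ = q}
      = Nat.multinomial univ (fun r => if r = q then multIdx j r - 1 else multIdx j r) := by
  obtain ⟨m, rfl⟩ : ∃ m', m = m' + 1 := ⟨m - 1, by omega⟩
  set β : Fin n → ℕ := fun r => if r = q then multIdx j r - 1 else multIdx j r
  have hjq : multIdx j q ≠ 0 := mem_suppIdx.1 hq
  have hcons : ∀ t : Idx m n,
      multIdx (Fin.cons q t : Idx (m + 1) n) = multIdx j ↔ multIdx t = β := by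
    intro t
    simp only [funext_iff, multIdx_cons, β]
    refine forall_congr' fun r => ?_
    rcases eq_or_ne r q with rfl | hr
    · simp only [if_true]; omega
    · simp [hr, hr.symm]
  obtain ⟨k, -, hk⟩ := mem_image.1 hq
  have hβ : multIdx (Fin.tail (j ∘ swap 0 k)) = β := by
    have hhead : (j ∘ swap 0 k) 0 = q := by simpa using hk
    have hsplit := Fin.cons_self_tail (j ∘ swap 0 k)
    rw [hhead] at hsplit
    rw [← hcons, hsplit, multIdx_comp_perm]
  rw [← hβ, ← card_multIdx_eq]
  refine Finset.card_bij' (fun j' _ => Fin.tail j') (fun t _ => Fin.cons q t) ?_ ?_ ?_ ?_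
  · intro j' hj'
    simp only [mem_filter, mem_univ, true_and] at hj' ⊢
    have hhead : j' 0 = q := hj'.2
    rw [hβ, ← hcons, ← hhead, Fin.cons_self_tail]
    exact hj'.1
  · intro t ht
    simp only [mem_filter, mem_univ, true_and] at ht ⊢
    exact ⟨(hcons t).2 (ht.trans hβ), rfl⟩
  · intro j' hj'
    simp only [mem_filter, mem_univ, true_and] at hj'
    rw [← hj'.2]
    exact Fin.cons_self_tail j'
  · intro t _
    simp

lemma eq_of_multIdx_eq_of_monotone {j j' : Idx m n} (hj : Monotone j) (hj' : Monotone j')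
    (h : multIdx j = multIdx j') : j = j' := by
  obtain ⟨σ, rfl⟩ := exists_perm_of_multIdx_eq h
  exact Tuple.unique_monotone (τ := Equiv.refl _) hj hj'

lemma eq_diagIdx_of_multIdx_eq {j : Idx m n} {q : Fin n}
    (h : multIdx j = multIdx (diagIdx q : Idx m n)) : j = diagIdx q := by
  obtain ⟨σ, rfl⟩ := exists_perm_of_multIdx_eq h
  rfl

lemma comp_perm_eq_diagIdx_iff {j : Idx m n} {σ : Perm (Fin m)} {q : Fin n} :
    j ∘ σ = diagIdx q ↔ j = diagIdx q := by
  refine ⟨fun h => funext fun k => ?_, fun h => by subst h; rfl⟩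
  simpa [diagIdx] using congrFun h (σ.symm k)

lemma not_exists_eq_diagIdx_of_head_eq_of_ne (hm : 0 < m) {i : Fin n} {j : Idx m n}
    (hj : j ⟨0, hm⟩ = i ∧ j ≠ diagIdx i) : ¬ ∃ q, j = diagIdx q := by
  rintro ⟨q, rfl⟩
  exact hj.2 (hj.1 ▸ rfl)

lemma rowSum_congr (hm : 0 < m) {A B : Idx m n → ℝ}
    (h : ∀ j, (¬ ∃ q, j = diagIdx q) → |A j| = |B j|) (i : Fin n) :
    rowSum hm A i = rowSum hm B i :=
  sum_congr rfl fun j hj => h j (not_exists_eq_diagIdx_of_head_eq_of_ne hm (mem_filter.1 hj).2)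

lemma rowSum_add_le (hm : 0 < m) (A B : Idx m n → ℝ) (i : Fin n) :
    rowSum hm (A + B) i ≤ rowSum hm A i + rowSum hm B i := by
  rw [rowSum, rowSum, rowSum, ← sum_add_distrib]
  exact sum_le_sum fun j _ => abs_add_le (A j) (B j)

lemma rowSum_smul (hm : 0 < m) (c : ℝ) (A : Idx m n → ℝ) (i : Fin n) :
    rowSum hm (c • A) i = |c| * rowSum hm A i := by
  simp only [rowSum, mul_sum, Pi.smul_apply, smul_eq_mul, abs_mul]

def ddPlusCone (hm : 0 < m) : PointedCone ℝ (Idx m n → ℝ) where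
  carrier := {A | IsDDplus hm A}
  zero_mem' := ⟨fun _ _ => rfl, fun i => by simp [rowSum]⟩
  add_mem' := by
    rintro A B ⟨hAs, hAd⟩ ⟨hBs, hBd⟩
    refine ⟨fun σ j => by simp [hAs σ j, hBs σ j], fun i => ?_⟩
    exact (rowSum_add_le hm A B i).trans (add_le_add (hAd i) (hBd i))
  smul_mem' := by
    rintro ⟨c, hc⟩ A ⟨hAs, hAd⟩
    refine ⟨fun σ j => by simp [Nonneg.mk_smul, hAs σ j], fun i => ?_⟩
    simp only [Nonneg.mk_smul, rowSum_smul, abs_of_nonneg hc, Pi.smul_apply, smul_eq_mul]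
    exact mul_le_mul_of_nonneg_left (hAd i) hc

noncomputable def tensorPoly (m n : ℕ) : (Idx m n → ℝ) →ₗ[ℝ] MvPolynomial (Fin n) ℝ :=
  Fintype.linearCombination ℝ fun j : Idx m n => ∏ k, X (j k)

lemma tensorPoly_apply (A : Idx m n → ℝ) :
    tensorPoly m n A = ∑ j, A j • ∏ k, (X (j k) : MvPolynomial (Fin n) ℝ) :=
  Fintype.linearCombination_apply ..

noncomputable def diagonalTensor : (Fin n → ℝ) →ₗ[ℝ] (Idx m n → ℝ) :=
  Fintype.linearCombination ℝ fun q => Pi.single (diagIdx q) 1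

lemma tensorPoly_diagonalTensor (d : Fin n → ℝ) :
    tensorPoly m n (diagonalTensor d) = ∑ q, d q • (X q ^ m : MvPolynomial (Fin n) ℝ) := by
  simp [diagonalTensor, Fintype.linearCombination_apply, map_sum, tensorPoly, diagIdx]

lemma diagonalTensor_apply (d : Fin n → ℝ) (j : Idx m n) :
    diagonalTensor d j = ∑ q, if j = diagIdx q then d q else 0 := by
  simp [diagonalTensor, Fintype.linearCombination_apply, Pi.single_apply]

lemma diagonalTensor_apply_diagIdx (hm : 0 < m) (d : Fin n → ℝ) (i : Fin n) :
    diagonalTensor d (diagIdx i : Idx m n) = d i := by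
  rw [diagonalTensor_apply, sum_eq_single i
    (fun q _ hq => if_neg fun h => hq (congrFun h ⟨0, hm⟩).symm) (by simp), if_pos rfl]

lemma diagonalTensor_apply_of_not_diag (d : Fin n → ℝ) {j : Idx m n}
    (hj : ¬ ∃ q, j = diagIdx q) : diagonalTensor d j = 0 := by
  rw [diagonalTensor_apply]
  exact sum_eq_zero fun q _ => if_neg fun h => hj ⟨q, h⟩

lemma diagonalTensor_comp_perm (d : Fin n → ℝ) (j : Idx m n) (σ : Perm (Fin m)) :
    diagonalTensor d (j ∘ σ) = diagonalTensor d j := by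
  simp only [diagonalTensor_apply, comp_perm_eq_diagIdx_iff]

lemma diagonalTensor_mem_ddPlusCone (hm : 0 < m) {d : Fin n → ℝ} (hd : ∀ i, 0 ≤ d i) :
    diagonalTensor d ∈ ddPlusCone hm := by
  refine ⟨fun σ j => diagonalTensor_comp_perm d j σ, fun i => ?_⟩
  rw [diagonalTensor_apply_diagIdx hm, rowSum_congr hm (B := 0)
    (fun j hj => by rw [diagonalTensor_apply_of_not_diag d hj, Pi.zero_apply]) i]
  simpa [rowSum] using hd i

noncomputable def orbitTensor (j : Idx m n) : Idx m n → ℝ :=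
  fun j' => if multIdx j' = multIdx j then 1 else 0

lemma tensorPoly_orbitTensor (j : Idx m n) :
    tensorPoly m n (orbitTensor j)
      = (Nat.multinomial univ (multIdx j) : ℝ) • ∏ k, (X (j k) : MvPolynomial (Fin n) ℝ) := by
  rw [tensorPoly_apply]
  simp only [orbitTensor, ite_smul, one_smul, zero_smul, ← sum_filter]
  rw [sum_congr rfl (g := fun _ => ∏ k, X (j k)) ?_, sum_const, card_multIdx_eq,
    Nat.cast_smul_eq_nsmul]
  intro j' hj'
  obtain ⟨σ, rfl⟩ := exists_perm_of_multIdx_eq (mem_filter.1 hj').2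
  exact Fintype.prod_equiv σ _ _ fun _ => rfl

lemma orbitTensor_apply_diagIdx {j : Idx m n} (hj : ¬ ∃ q, j = diagIdx q) (i : Fin n) :
    orbitTensor j (diagIdx i) = 0 :=
  if_neg fun h => hj ⟨i, eq_diagIdx_of_multIdx_eq h.symm⟩

lemma rowSum_orbitTensor (hm : 0 < m) {j : Idx m n} (hj : ¬ ∃ q, j = diagIdx q) (i : Fin n) :
    rowSum hm (orbitTensor j) i = if i ∈ suppIdx j then
      (Nat.multinomial univ (fun r => if r = i then multIdx j r - 1 else multIdx j r) : ℝ)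
      else 0 := by
  have hcard :
      rowSum hm (orbitTensor j) i = #{j' | multIdx j' = multIdx j ∧ j' ⟨0, hm⟩ = i} := by
    simp only [rowSum, orbitTensor, apply_ite abs, abs_one, abs_zero, sum_boole, filter_filter]
    congr 2
    ext j'
    simp only [mem_filter, mem_univ, true_and]
    refine ⟨fun h => ⟨h.2, h.1.1⟩, fun h => ⟨⟨h.2, ?_⟩, h.1⟩⟩
    rintro rfl
    exact hj ⟨i, eq_diagIdx_of_multIdx_eq h.1.symm⟩
  rw [hcard]
  split_ifs with hi
  · rw [card_multIdx_eq_and_head_eq hm hi]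
  · rw [Nat.cast_eq_zero, card_eq_zero, filter_eq_empty_iff]
    rintro j' - ⟨h, rfl⟩
    exact hi (mem_suppIdx.2 (h ▸ mem_suppIdx.1 (mem_image_of_mem j' (mem_univ _))))

/-- The paper's generator `𝒱^{c,j}` of `DD⁺_{m,n}` (`c = false` for `+`, `true` for `-`). -/
noncomputable def generatorTensor (hm : 0 < m) (c : Bool) (j : Idx m n) : Idx m n → ℝ :=
  (if c then (-1 : ℝ) else 1) • orbitTensor j + diagonalTensor (rowSum hm (orbitTensor j))

lemma generatorTensor_apply_diagIdx (hm : 0 < m) (c : Bool) {j : Idx m n}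
    (hj : ¬ ∃ q, j = diagIdx q) (i : Fin n) :
    generatorTensor hm c j (diagIdx i) = rowSum hm (orbitTensor j) i := by
  simp only [generatorTensor, Pi.add_apply, Pi.smul_apply, orbitTensor_apply_diagIdx hj,
    smul_zero, diagonalTensor_apply_diagIdx hm, zero_add]

lemma generatorTensor_apply_of_not_diag (hm : 0 < m) (c : Bool) (j : Idx m n) {j' : Idx m n}
    (hj' : ¬ ∃ q, j' = diagIdx q) :
    generatorTensor hm c j j' = (if c then (-1 : ℝ) else 1) * orbitTensor j j' := by
  simp only [generatorTensor, Pi.add_apply, Pi.smul_apply,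
    diagonalTensor_apply_of_not_diag _ hj', add_zero, smul_eq_mul]

lemma generatorTensor_mem_ddPlusCone (hm : 0 < m) (c : Bool) {j : Idx m n}
    (hj : ¬ ∃ q, j = diagIdx q) : generatorTensor hm c j ∈ ddPlusCone hm := by
  refine ⟨fun σ j' => ?_, fun i => ?_⟩
  · simp only [generatorTensor, Pi.add_apply, Pi.smul_apply, diagonalTensor_comp_perm,
      orbitTensor, multIdx_comp_perm]
  · rw [generatorTensor_apply_diagIdx hm c hj]
    refine le_of_eq (rowSum_congr hm (fun j' hj' => ?_) i)
    rw [generatorTensor_apply_of_not_diag hm c j hj', abs_mul]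
    cases c <;> simp

lemma tensorPoly_generatorTensor (hm : 0 < m) (c : Bool) {j : Idx m n}
    (hj : ¬ ∃ q, j = diagIdx q) : tensorPoly m n (generatorTensor hm c j) = fGen m n c j := by
  have hzero : ∀ q ∉ suppIdx j, multIdx j q = 0 := fun q hq => not_not.1 (mt mem_suppIdx.2 hq)
  rw [generatorTensor, map_add, map_smul, tensorPoly_orbitTensor, tensorPoly_diagonalTensor,
    fGen, add_comm, smul_smul, multinomial_suppIdx hzero]
  congr 1
  simp only [rowSum_orbitTensor hm hj, ite_smul, zero_smul, sum_ite_mem, univ_inter]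
  refine sum_congr rfl fun p _ => ?_
  rw [multinomial_suppIdx]
  intro q hq
  simp [hzero q hq]

section

open scoped Classical

lemma sum_mul_orbitTensor_apply {B : Idx m n → ℝ} (hB : IsSymmetric B) {j : Idx m n}
    (hj : ¬ ∃ q, j = diagIdx q) :
    ∑ jh, (if Monotone jh ∧ ¬ (∃ q : Fin n, jh = diagIdx q) then
      B jh * orbitTensor jh j else 0) = B j := by
  have hsort : Monotone (j ∘ Tuple.sort j) ∧ ¬ ∃ q, j ∘ Tuple.sort j = diagIdx q :=
    ⟨Tuple.monotone_sort j, fun ⟨q, h⟩ => hj ⟨q, comp_perm_eq_diagIdx_iff.1 h⟩⟩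
  rw [sum_eq_single (j ∘ Tuple.sort j), if_pos hsort, orbitTensor,
    if_pos (multIdx_comp_perm j _).symm, mul_one, hB]
  · intro jh _ hne
    refine ite_eq_right_iff.2 fun hjh => ?_
    rw [orbitTensor, if_neg, mul_zero]
    exact fun h => hne (eq_of_multIdx_eq_of_monotone hjh.1 hsort.1
      (h.symm.trans (multIdx_comp_perm j _).symm))
  · simp

lemma rowSum_eq_sum_orbitTensor (hm : 0 < m) {A : Idx m n → ℝ} (hA : IsSymmetric A)
    (i : Fin n) :
    rowSum hm A i = ∑ jh, (if Monotone jh ∧ ¬ (∃ q : Fin n, jh = diagIdx q) then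
      |A jh| * rowSum hm (orbitTensor jh) i else 0) := by
  have habs : IsSymmetric fun j => |A j| := fun σ j => by simp only [hA σ j]
  have hO : ∀ jh j : Idx m n, |orbitTensor jh j| = orbitTensor jh j := fun _ _ =>
    abs_of_nonneg (by unfold orbitTensor; split_ifs <;> norm_num)
  calc rowSum hm A i
      = ∑ j ∈ univ.filter (fun j : Idx m n => j ⟨0, hm⟩ = i ∧ j ≠ diagIdx i),
          ∑ jh, (if Monotone jh ∧ ¬ (∃ q : Fin n, jh = diagIdx q) then
            |A jh| * orbitTensor jh j else 0) :=
        sum_congr rfl fun j hj => (sum_mul_orbitTensor_apply habs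
          (not_exists_eq_diagIdx_of_head_eq_of_ne hm (mem_filter.1 hj).2)).symm
    _ = _ := by
        rw [sum_comm]
        refine sum_congr rfl fun jh _ => ?_
        split_ifs <;> simp [rowSum, hO, mul_sum]

noncomputable def ddthTensor (hm : 0 < m) (γ : Fin n → ℝ) (bp bm : Idx m n → ℝ) :
    Idx m n → ℝ :=
  diagonalTensor γ + ∑ jh, if Monotone jh ∧ ¬ (∃ q : Fin n, jh = diagIdx q) then
    bp jh • generatorTensor hm false jh + bm jh • generatorTensor hm true jh else 0

lemma tensorPoly_ddthTensor (hm : 0 < m) (γ : Fin n → ℝ) (bp bm : Idx m n → ℝ) :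
    tensorPoly m n (ddthTensor hm γ bp bm)
      = (∑ i, γ i • (X i ^ m : MvPolynomial (Fin n) ℝ)) + ∑ jh,
        (if Monotone jh ∧ ¬ (∃ q : Fin n, jh = diagIdx q) then
          bp jh • fGen m n false jh + bm jh • fGen m n true jh else 0) := by
  rw [ddthTensor, map_add, map_sum, tensorPoly_diagonalTensor]
  congr 1
  refine sum_congr rfl fun jh _ => ?_
  split_ifs with h
  · rw [map_add, map_smul, map_smul, tensorPoly_generatorTensor hm _ h.2,
      tensorPoly_generatorTensor hm _ h.2]
  · exact map_zero _

lemma ddthTensor_mem_ddPlusCone (hm : 0 < m) {γ : Fin n → ℝ} {bp bm : Idx m n → ℝ}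
    (hγ : ∀ i, 0 ≤ γ i) (hbp : ∀ j, 0 ≤ bp j) (hbm : ∀ j, 0 ≤ bm j) :
    ddthTensor hm γ bp bm ∈ ddPlusCone hm := by
  refine add_mem (diagonalTensor_mem_ddPlusCone hm hγ) (sum_mem fun jh _ => ?_)
  split_ifs with h
  · exact add_mem (PointedCone.smul_mem _ (hbp jh) (generatorTensor_mem_ddPlusCone hm false h.2))
      (PointedCone.smul_mem _ (hbm jh) (generatorTensor_mem_ddPlusCone hm true h.2))
  · exact zero_mem _

lemma eq_ddthTensor (hm : 0 < m) {A : Idx m n → ℝ} (hA : IsSymmetric A) :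
    A = ddthTensor hm (fun i => A (diagIdx i) - rowSum hm A i) A⁺ A⁻ := by
  funext j
  simp only [ddthTensor, Pi.add_apply, Finset.sum_apply, apply_ite (fun T : Idx m n → ℝ => T j),
    Pi.zero_apply, Pi.smul_apply, smul_eq_mul]
  by_cases hj : ∃ q, j = diagIdx q
  · obtain ⟨i, rfl⟩ := hj
    rw [diagonalTensor_apply_diagIdx hm, rowSum_eq_sum_orbitTensor hm hA i,
      sub_add_eq_add_sub, eq_sub_iff_add_eq]
    congr 1
    refine sum_congr rfl fun jh _ => ?_
    split_ifs with h
    · rw [generatorTensor_apply_diagIdx hm _ h.2, generatorTensor_apply_diagIdx hm _ h.2,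
        ← add_mul, Pi.posPart_apply, Pi.negPart_apply, posPart_add_negPart]
    · rfl
  · rw [diagonalTensor_apply_of_not_diag _ hj, zero_add]
    conv_lhs => rw [← sum_mul_orbitTensor_apply hA hj]
    refine sum_congr rfl fun jh _ => ?_
    split_ifs
    · rw [generatorTensor_apply_of_not_diag hm _ _ hj, generatorTensor_apply_of_not_diag hm _ _ hj]
      simp only [Pi.posPart_apply, Pi.negPart_apply, Bool.false_eq_true, if_true, if_false]
      linear_combination (-orbitTensor jh j) * posPart_sub_negPart (A jh)
    · rfl

end

end DDTensor

open DDTensor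

/-- A polynomial is DDTH of degree `m` iff it is induced by a symmetric diagonally dominant
tensor with nonnegative diagonal: `p(x) = A x^m` for some `A ∈ DD⁺_{m,n}`. -/
theorem DDTH_iff_DDplus (m n : ℕ) (hm : 0 < m) (p : MvPolynomial (Fin n) ℝ) :
    IsDDTH m n p ↔ ∃ A : Idx m n → ℝ, IsDDplus hm A ∧
      p = ∑ j : Idx m n, (A j) • ∏ k : Fin m, (X (j k) : MvPolynomial (Fin n) ℝ) := by
  simp_rw [← tensorPoly_apply]
  constructor
  · rintro ⟨γ, bp, bm, hγ, hbp, hbm, rfl⟩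
    exact ⟨ddthTensor hm γ bp bm, ddthTensor_mem_ddPlusCone hm hγ hbp hbm,
      (tensorPoly_ddthTensor hm γ bp bm).symm⟩
  · rintro ⟨A, hA, rfl⟩
    refine ⟨_, A⁺, A⁻, fun i => sub_nonneg.2 (hA.2 i), fun j => posPart_nonneg (A j),
      fun j => negPart_nonneg (A j), ?_⟩
    rw [← tensorPoly_ddthTensor hm, ← eq_ddthTensor hm hA.1]
end
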